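/- arXiv:2504.01623 — 11 statements merged into one kernel-verified Lean document; each statement's English description precedes it below -/
import Mathlib

section
/- Let n ≥ 1 and let G be a graph on vertex set {1,…,n+1} (a loopless directed finite multigraph with all edges directed from smaller to larger vertices). Then the restricted Kostant partition function of G is discretely log-concave along type A root directions: for every v ∈ ℤ^{n+1} and all i, j ∈ {1,…,n+1}, K_G(v)² ≥ K_G(v + ε_i − ε_j) · K_G(v + ε_j − ε_i). -/
open Finset

/-- The `i`-th standard basis vector of `ℤ^{n+1}`. -/
def eps (n : ℕ) (i : Fin (n + 1)) : Fin (n + 1) → ℤ := Pi.single i 1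

/-- The restricted Kostant partition function of a graph on `{1,…,n+1}` with
edge set `E`, source map `s` and target map `t`:  the number of functions
`f : E → ℕ` with `∑_e f(e)(ε_{s(e)} - ε_{t(e)}) = v`. -/
noncomputable def kpfG (n : ℕ) (E : Type) [Fintype E] (s t : E → Fin (n + 1))
    (v : Fin (n + 1) → ℤ) : ℕ :=
  Set.ncard {f : E → ℕ | ∑ e, (f e : ℤ) • (eps n (s e) - eps n (t e)) = v}

/-!
Acyclicity makes the solution sets finite, so the three counts are counts of flows with
prescribed net flow in one box `[0, U]`. In any box `[l, u]`, pairing solutions for `v ± α`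
(and for `v, v`) by their sum `m` splits both products into sums over `m` of counts in the
boxes `[l ⊔ (m - u), u ⊓ (m - l)]`, whose corners add up to `m`. It therefore suffices that in a
box whose corners have net flows adding up to `2v`, the fibre over `v + α` is no larger than the
fibre over `v`. This goes by induction on the box: splitting the squares `d₁²` and `d₀²` of the
two fibre sizes in the same way, the sum `m = l + u` contributes `d₁` and `d₀`, every other `m`
a strictly smaller box, so `d₁² - d₁ ≤ d₀² - d₀`, and `d₁ ≤ d₀` follows once `d₁ > 0` forces
`d₀ > 0`. For that, given `f` over `v + α`, its reflection `g = l + u - f` lies over `v - α`;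
after reversing the edges where `f < g`, `|f - g|` is a nonnegative flow from `i` to `j`, so it
contains a path from `i` to `j`, and moving `f` along that path towards `g` lands over `v`
without leaving the box.
-/

section NetFlow

variable {E V : Type*} [Fintype E] [DecidableEq V]

def netFlow (s t : E → V) : (E → ℤ) →ₗ[ℤ] V → ℤ :=
  Fintype.linearCombination ℤ fun e => Pi.single (s e) 1 - Pi.single (t e) 1

variable (s t : E → V)

lemma netFlow_apply (f : E → ℤ) :
    netFlow s t f = ∑ e, f e • (Pi.single (s e) 1 - Pi.single (t e) 1) :=
  Fintype.linearCombination_apply ..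

lemma netFlow_apply_apply (f : E → ℤ) (k : V) :
    netFlow s t f k = ∑ e, f e * ((if s e = k then 1 else 0) - if t e = k then 1 else 0) := by
  simp [netFlow_apply, Finset.sum_apply, Pi.single_apply, eq_comm]

lemma netFlow_single [DecidableEq E] (e : E) :
    netFlow s t (Pi.single e 1) = Pi.single (s e) 1 - Pi.single (t e) 1 := by
  simp [netFlow_apply, Pi.single_apply]

lemma netFlow_reverse (R : E → Prop) [DecidablePred R] (f : E → ℤ) :
    netFlow (fun e => if R e then t e else s e) (fun e => if R e then s e else t e) f =
      netFlow s t fun e => if R e then -f e else f e := by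
  simp only [netFlow_apply]
  refine Finset.sum_congr rfl fun e _ => ?_
  split_ifs
  · rw [neg_smul, ← smul_neg, neg_sub]
  · rfl

variable {s t}

lemma exists_source_of_netFlow_pos {q : E → ℤ} (hq : 0 ≤ q) {i : V} (hi : 0 < netFlow s t q i) :
    ∃ e, s e = i ∧ 0 < q e := by
  by_contra! h
  rw [netFlow_apply_apply] at hi
  refine hi.not_ge (Finset.sum_nonpos fun e _ => ?_)
  have hqe : 0 ≤ q e := hq e
  by_cases hs : s e = i
  · have := h e hs
    split_ifs <;> nlinarith
  · split_ifs <;> nlinarith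

lemma exists_mem_Icc_netFlow_eq_single_sub_single [DecidableEq E] {q : E → ℤ} (hq : 0 ≤ q)
    {i j : V} (hi : 0 < netFlow s t q i) (hj : ∀ k ≠ j, 0 ≤ netFlow s t q k) :
    ∃ p ∈ Icc 0 q, netFlow s t p = Pi.single i 1 - Pi.single j 1 := by
  induction hc : #(Icc 0 q) using Nat.strong_induction_on generalizing q i with
  | _ c ih =>
  obtain ⟨e, rfl, he⟩ := exists_source_of_netFlow_pos hq hi
  have hsingle : Pi.single e 1 ≤ q := fun e' => by
    rcases eq_or_ne e' e with rfl | h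
    · simpa using Int.add_one_le_of_lt he
    · simpa [h] using hq e'
  by_cases htj : t e = j
  · exact ⟨Pi.single e 1, mem_Icc.2 ⟨Pi.single_nonneg.2 zero_le_one, hsingle⟩,
      by rw [netFlow_single, htj]⟩
  set q' := q - Pi.single e 1
  have hq' : 0 ≤ q' := sub_nonneg.2 hsingle
  have hflow k : netFlow s t q' k =
      netFlow s t q k - ((Pi.single (s e) 1 : V → ℤ) k - (Pi.single (t e) 1 : V → ℤ) k) := by
    simp [q', map_sub, netFlow_single]
  have hlt : #(Icc 0 q') < c := hc ▸ card_lt_card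
    (Icc_ssubset_Icc_right hq le_rfl (sub_lt_self q (Pi.single_pos.2 zero_lt_one)))
  have hpos : 0 < netFlow s t q' (t e) := by
    have := hj (t e) htj
    rw [hflow]
    rcases eq_or_ne (t e) (s e) with h | h
    · simp [h, hi]
    · simp [h]; omega
  have hnonneg : ∀ k ≠ j, 0 ≤ netFlow s t q' k := fun k hk => by
    have := hj k hk
    rw [hflow]
    rcases eq_or_ne k (s e) with rfl | h
    · simp only [Pi.single_apply]
      split_ifs <;> omega
    · simp only [Pi.single_apply, h, if_false]
      split_ifs <;> omega
  obtain ⟨p, hp, hpflow⟩ := ih _ hlt hq' hpos hnonneg rfl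
  obtain ⟨hp₀, hpq⟩ := mem_Icc.1 hp
  refine ⟨p + Pi.single e 1, mem_Icc.2 ⟨?_, ?_⟩, ?_⟩
  · exact add_nonneg hp₀ (Pi.single_nonneg.2 zero_le_one)
  · simpa [q'] using add_le_add hpq (le_refl (Pi.single e 1))
  · rw [map_add, hpflow, netFlow_single]
    abel

lemma exists_mem_Icc_inf_sup_netFlow_eq [DecidableEq E] {f g : E → ℤ} {v : V → ℤ} {i j : V}
    (hf : netFlow s t f = v + (Pi.single i 1 - Pi.single j 1))
    (hg : netFlow s t g = v - (Pi.single i 1 - Pi.single j 1)) :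
    ∃ F ∈ Icc (f ⊓ g) (f ⊔ g), netFlow s t F = v := by
  rcases eq_or_ne i j with rfl | hij
  · exact ⟨f, mem_Icc.2 ⟨inf_le_left, le_sup_left⟩, by simpa using hf⟩
  have hsigned : (fun e => if f e < g e then -|f - g| e else |f - g| e) = f - g :=
    funext fun e => by
      by_cases h : f e < g e
      · simp [h, abs_of_neg (sub_neg.2 h)]
      · simp [h, abs_of_nonneg (sub_nonneg.2 (not_lt.1 h))]
  have hflow : netFlow (fun e => if f e < g e then t e else s e)
      (fun e => if f e < g e then s e else t e) |f - g| =
        (Pi.single i 1 - Pi.single j 1) + (Pi.single i 1 - Pi.single j 1) := by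
    rw [netFlow_reverse, hsigned, map_sub, hf, hg]
    abel
  obtain ⟨p, hp, hpflow⟩ := exists_mem_Icc_netFlow_eq_single_sub_single (q := |f - g|)
    (abs_nonneg _) (i := i) (j := j) (by rw [hflow]; simp [hij]) (fun k hk => by
      rw [hflow]
      simp [Pi.single_apply, hk]
      split_ifs <;> omega)
  rw [netFlow_reverse] at hpflow
  refine ⟨f - fun e => if f e < g e then -p e else p e, mem_Icc.2 ⟨fun e => ?_, fun e => ?_⟩,
    by rw [map_sub, hf, hpflow]; abel⟩
  all_goals
    have h₀ := (mem_Icc.1 hp).1 e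
    have h₁ := (mem_Icc.1 hp).2 e
    simp only [Pi.abs_apply, Pi.zero_apply] at h₀ h₁
    by_cases h : f e < g e
    · simp [h, abs_of_neg (sub_neg.2 h)] at h₁ ⊢
      omega
    · simp [h, abs_of_nonneg (sub_nonneg.2 (not_lt.1 h))] at h₁ ⊢
      omega

end NetFlow

section OrderedGroup

variable {G : Type*} [AddCommGroup G] [Lattice G] [IsOrderedAddMonoid G] (l u m : G)

lemma sup_sub_add_inf_sub : l ⊔ (m - u) + u ⊓ (m - l) = m := by
  rw [inf_comm, ← sub_sub_cancel m u, ← sub_sup, sub_sub_cancel, sup_comm, add_sub_cancel]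

lemma mem_Icc_sup_sub_inf_sub_iff {f : G} :
    f ∈ Set.Icc (l ⊔ (m - u)) (u ⊓ (m - l)) ↔ f ∈ Set.Icc l u ∧ m - f ∈ Set.Icc l u := by
  rw [Set.sub_mem_Icc_iff_right]
  simp only [Set.mem_Icc, sup_le_iff, le_inf_iff]
  tauto

lemma Icc_sup_sub_inf_sub_ssubset [LocallyFiniteOrder G] {l u m : G} (hlu : l ≤ u)
    (hm : m ≠ l + u) : Icc (l ⊔ (m - u)) (u ⊓ (m - l)) ⊂ Icc l u := by
  refine (Icc_subset_Icc le_sup_left inf_le_left).ssubset_of_ne fun h => hm ?_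
  have hl := (mem_Icc.1 (h ▸ left_mem_Icc.2 hlu)).1
  have hu := (mem_Icc.1 (h ▸ right_mem_Icc.2 hlu)).2
  rw [← sup_sub_add_inf_sub l u m, le_antisymm hl le_sup_left, le_antisymm inf_le_left hu]

lemma add_sub_mem_Icc [LocallyFiniteOrder G] {l u f : G} (hf : f ∈ Icc l u) :
    l + u - f ∈ Icc l u := by
  rwa [← mem_coe, coe_Icc, Set.sub_mem_Icc_iff_right, add_sub_cancel_right, add_sub_cancel_left,
    ← coe_Icc, mem_coe]

end OrderedGroup

lemma card_mul_card_eq_sum_card_filter_sub_mem {G : Type*} [AddCommGroup G] [DecidableEq G]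
    (A B M : Finset G) (hM : ∀ a ∈ A, ∀ b ∈ B, a + b ∈ M) :
    #A * #B = ∑ m ∈ M, #{a ∈ A | m - a ∈ B} := by
  rw [← card_product, card_eq_sum_card_fiberwise (f := fun p => p.1 + p.2)
    fun p hp => hM _ (mem_product.1 hp).1 _ (mem_product.1 hp).2]
  refine sum_congr rfl fun m _ => card_nbij' Prod.fst (fun a => (a, m - a)) ?_ ?_ ?_ ?_
  · rintro ⟨a, b⟩ h
    simp only [mem_coe, mem_filter, mem_product] at h ⊢
    rw [← h.2, add_sub_cancel_left]
    exact h.1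
  · intro a h
    simp only [mem_coe, mem_filter, mem_product] at h ⊢
    exact ⟨h, add_sub_cancel a m⟩
  · rintro ⟨a, b⟩ h
    simp only [mem_coe, mem_filter, mem_product] at h
    simp [← h.2]
  · intro a _
    rfl

section BoxFlowCount

variable {E V : Type*} [Fintype E] [DecidableEq E] [Fintype V] [DecidableEq V] (s t : E → V)

noncomputable def boxFlowCount (l u : E → ℤ) (w : V → ℤ) : ℕ :=
  #{f ∈ Icc l u | netFlow s t f = w}

variable {s t}

lemma boxFlowCount_add_eq_sub {l u : E → ℤ} {v : V → ℤ}
    (h : netFlow s t l + netFlow s t u = v + v) (a : V → ℤ) :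
    boxFlowCount s t l u (v + a) = boxFlowCount s t l u (v - a) := by
  have hflow {f : E → ℤ} (b : V → ℤ) (hf : netFlow s t f = v + b) :
      netFlow s t (l + u - f) = v - b := by
    rw [map_sub, map_add, h, hf]
    abel
  refine card_nbij' (fun f => l + u - f) (fun f => l + u - f) ?_ ?_ ?_ ?_
  · intro f hf
    simp only [mem_coe, mem_filter] at hf ⊢
    exact ⟨add_sub_mem_Icc hf.1, hflow a hf.2⟩
  · intro f hf
    simp only [mem_coe, mem_filter] at hf ⊢
    exact ⟨add_sub_mem_Icc hf.1, by simpa using hflow (-a) (by rw [hf.2, sub_eq_add_neg])⟩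
  · intro f _
    exact sub_sub_cancel _ _
  · intro f _
    exact sub_sub_cancel _ _

lemma boxFlowCount_pos_of_add_single_sub_single_pos {l u : E → ℤ} {v : V → ℤ} {i j : V}
    (h : netFlow s t l + netFlow s t u = v + v)
    (hpos : 0 < boxFlowCount s t l u (v + (Pi.single i 1 - Pi.single j 1))) :
    0 < boxFlowCount s t l u v := by
  obtain ⟨f, hf⟩ := card_pos.1 hpos
  obtain ⟨hfl, hfu⟩ := mem_Icc.1 (mem_filter.1 hf).1
  have hg : netFlow s t (l + u - f) = v - (Pi.single i 1 - Pi.single j 1) := by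
    rw [map_sub, map_add, h, (mem_filter.1 hf).2]
    abel
  obtain ⟨F, hF, hFflow⟩ := exists_mem_Icc_inf_sup_netFlow_eq (mem_filter.1 hf).2 hg
  obtain ⟨hgl, hgu⟩ := mem_Icc.1 (add_sub_mem_Icc (mem_filter.1 hf).1)
  exact card_pos.2 ⟨F, mem_filter.2 ⟨Icc_subset_Icc (le_inf hfl hgl) (sup_le hfu hgu) hF, hFflow⟩⟩

lemma boxFlowCount_mul_boxFlowCount (l u : E → ℤ) (w₁ w₂ : V → ℤ) :
    boxFlowCount s t l u w₁ * boxFlowCount s t l u w₂ =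
      ∑ m ∈ Icc (l + l) (u + u) with netFlow s t m = w₁ + w₂,
        boxFlowCount s t (l ⊔ (m - u)) (u ⊓ (m - l)) w₁ := by
  rw [boxFlowCount, boxFlowCount, card_mul_card_eq_sum_card_filter_sub_mem _ _ (Icc (l + l) (u + u))
    fun a ha b hb => ?_, sum_filter]
  · refine sum_congr rfl fun m _ => ?_
    split_ifs with hm
    · congr 1
      ext f
      simp only [mem_filter, ← mem_coe (s := Icc _ _), coe_Icc, mem_Icc_sup_sub_inf_sub_iff, map_sub]
      constructor
      · rintro ⟨⟨hf, hfw⟩, hmf, -⟩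
        exact ⟨⟨hf, hmf⟩, hfw⟩
      · rintro ⟨⟨hf, hmf⟩, hfw⟩
        exact ⟨⟨hf, hfw⟩, hmf, by rw [hm, hfw, add_sub_cancel_left]⟩
    · refine card_eq_zero.2 (filter_eq_empty_iff.2 fun f hf hmf => hm ?_)
      rw [← sub_add_cancel m f, map_add, (mem_filter.1 hmf).2, (mem_filter.1 hf).2, add_comm]
  · obtain ⟨hal, hau⟩ := mem_Icc.1 (mem_filter.1 ha).1
    obtain ⟨hbl, hbu⟩ := mem_Icc.1 (mem_filter.1 hb).1
    exact mem_Icc.2 ⟨add_le_add hal hbl, add_le_add hau hbu⟩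

theorem boxFlowCount_add_single_sub_single_le {l u : E → ℤ} {v : V → ℤ}
    (h : netFlow s t l + netFlow s t u = v + v) (i j : V) :
    boxFlowCount s t l u (v + (Pi.single i 1 - Pi.single j 1)) ≤ boxFlowCount s t l u v := by
  induction hc : #(Icc l u) using Nat.strong_induction_on generalizing l u v with
  | _ c ih =>
  by_cases hlu : l ≤ u
  swap
  · simp [boxFlowCount, Icc_eq_empty hlu]
  set α : V → ℤ := Pi.single i 1 - Pi.single j 1
  let S := {m ∈ Icc (l + l) (u + u) | netFlow s t m = v + v}
  have hcentre : l + u ∈ S := mem_filter.2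
    ⟨mem_Icc.2 ⟨add_le_add_right hlu l, add_le_add_left hlu u⟩, by rw [map_add, h]⟩
  -- Both squares split as sums over `m ∈ S`; the term `m = l + u` is the fibre itself, and all
  -- other terms are counts in strictly smaller boxes.
  have hα := boxFlowCount_mul_boxFlowCount (s := s) (t := t) l u (v + α) (v - α)
  have h₀ := boxFlowCount_mul_boxFlowCount (s := s) (t := t) l u v v
  rw [← boxFlowCount_add_eq_sub h, add_add_sub_cancel] at hα
  rw [← add_sum_erase _ _ hcentre, add_sub_cancel_right, add_sub_cancel_left, sup_idem, inf_idem]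
    at hα h₀
  have hrest : ∑ m ∈ S.erase (l + u), boxFlowCount s t (l ⊔ (m - u)) (u ⊓ (m - l)) (v + α) ≤
      ∑ m ∈ S.erase (l + u), boxFlowCount s t (l ⊔ (m - u)) (u ⊓ (m - l)) v := by
    refine sum_le_sum fun m hm => ih _ ?_ ?_ rfl
    · exact hc ▸ card_lt_card (Icc_sup_sub_inf_sub_ssubset hlu (ne_of_mem_erase hm))
    · rw [← map_add, sup_sub_add_inf_sub]
      exact (mem_filter.1 (mem_of_mem_erase hm)).2
  have hpos := boxFlowCount_pos_of_add_single_sub_single_pos (i := i) (j := j) h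
  by_contra! hlt
  have := hpos (pos_of_gt hlt)
  nlinarith

theorem boxFlowCount_add_mul_sub_le_sq (l u : E → ℤ) (v : V → ℤ) (i j : V) :
    boxFlowCount s t l u (v + (Pi.single i 1 - Pi.single j 1)) *
        boxFlowCount s t l u (v - (Pi.single i 1 - Pi.single j 1)) ≤
      boxFlowCount s t l u v ^ 2 := by
  rw [sq, boxFlowCount_mul_boxFlowCount, boxFlowCount_mul_boxFlowCount, add_add_sub_cancel]
  refine sum_le_sum fun m hm => boxFlowCount_add_single_sub_single_le ?_ i j
  rw [← map_add, sup_sub_add_inf_sub]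
  exact (mem_filter.1 hm).2

end BoxFlowCount

section Potential

variable {E V : Type*} [Fintype E] [Fintype V] [DecidableEq V] {s t : E → V}

lemma sum_mul_netFlow (φ : V → ℤ) (f : E → ℤ) :
    ∑ k, φ k * netFlow s t f k = ∑ e, f e * (φ (s e) - φ (t e)) := by
  simp only [netFlow_apply_apply, mul_sum]
  rw [sum_comm]
  refine sum_congr rfl fun e _ => ?_
  simp [mul_sub, sum_sub_distrib, mul_comm]

lemma le_neg_sum_mul_netFlow {φ : V → ℤ} (hφ : ∀ e, φ (s e) < φ (t e)) {f : E → ℤ} (hf : 0 ≤ f)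
    (e : E) : f e ≤ -∑ k, φ k * netFlow s t f k := by
  rw [sum_mul_netFlow, ← sum_neg_distrib]
  calc f e ≤ ∑ e, f e := single_le_sum (fun e _ => hf e) (mem_univ e)
    _ ≤ ∑ e, -(f e * (φ (s e) - φ (t e))) := sum_le_sum fun e _ => by
      have : 0 ≤ f e := hf e
      have := hφ e
      nlinarith

lemma ncard_netFlow_eq_boxFlowCount [DecidableEq E] {φ : V → ℤ} (hφ : ∀ e, φ (s e) < φ (t e))
    {w : V → ℤ} {U : E → ℤ} (hU : ∀ e, -∑ k, φ k * w k ≤ U e) :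
    {f : E → ℕ | netFlow s t (fun e => (f e : ℤ)) = w}.ncard = boxFlowCount s t 0 U w := by
  rw [boxFlowCount, ← Set.ncard_coe_finset,
    ← Set.ncard_image_of_injective _ (Nat.cast_injective (R := ℤ)).comp_left]
  congr 1
  ext f
  simp only [Set.mem_image, Set.mem_ofPred_eq, coe_filter, mem_Icc]
  constructor
  · rintro ⟨g, hg, rfl⟩
    refine ⟨⟨fun e => Int.natCast_nonneg _, fun e => ?_⟩, hg⟩
    exact (le_neg_sum_mul_netFlow hφ (fun e => Int.natCast_nonneg (g e)) e).trans (hg ▸ hU e)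
  · rintro ⟨⟨hf, -⟩, hfw⟩
    refine ⟨fun e => (f e).toNat, ?_, funext fun e => Int.toNat_of_nonneg (hf e)⟩
    simpa only [Int.toNat_of_nonneg (hf _)] using hfw

end Potential

theorem restricted_kpf_discretely_log_concave_general (n : ℕ)
    (E : Type) [Fintype E] (s t : E → Fin (n + 1)) (hst : ∀ e, s e < t e)
    (v : Fin (n + 1) → ℤ) (i j : Fin (n + 1)) :
    kpfG n E s t (v + eps n i - eps n j) * kpfG n E s t (v + eps n j - eps n i)
      ≤ kpfG n E s t v ^ 2 := by
  classical
  let φ : Fin (n + 1) → ℤ := fun k => k.val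
  have hφ : ∀ e, φ (s e) < φ (t e) := fun e => Int.ofNat_lt.2 (hst e)
  have hkpf (w : Fin (n + 1) → ℤ) :
      kpfG n E s t w = {f : E → ℕ | netFlow s t (fun e => (f e : ℤ)) = w}.ncard := by
    simp only [kpfG, eps, netFlow_apply]
  let C (w : Fin (n + 1) → ℤ) : ℤ := -∑ k, φ k * w k
  set α : Fin (n + 1) → ℤ := Pi.single i 1 - Pi.single j 1
  let U : E → ℤ := fun _ => max (C v) (max (C (v + α)) (C (v - α)))
  have hplus : v + eps n i - eps n j = v + α := by simp only [eps, α]; abel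
  have hminus : v + eps n j - eps n i = v - α := by simp only [eps, α]; abel
  rw [hplus, hminus, hkpf, hkpf, hkpf,
    ncard_netFlow_eq_boxFlowCount hφ (U := U) fun _ => le_max_left _ _,
    ncard_netFlow_eq_boxFlowCount hφ (U := U) fun _ => (le_max_left _ _).trans (le_max_right _ _),
    ncard_netFlow_eq_boxFlowCount hφ (U := U) fun _ => (le_max_right _ _).trans (le_max_right _ _)]
  exact boxFlowCount_add_mul_sub_le_sq 0 U v i j

/-- The restricted Kostant partition function of any loopless directed finite
multigraph on `{1,…,n+1}` (edges directed from smaller to larger vertices) is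
discretely log-concave along type `A` root directions. -/
theorem restricted_kpf_discretely_log_concave (n : ℕ) (hn : 1 ≤ n)
    (E : Type) [Fintype E] (s t : E → Fin (n + 1)) (hst : ∀ e, s e < t e)
    (v : Fin (n + 1) → ℤ) (i j : Fin (n + 1)) :
    kpfG n E s t (v + eps n i - eps n j) * kpfG n E s t (v + eps n j - eps n i)
      ≤ kpfG n E s t v ^ 2 :=
  restricted_kpf_discretely_log_concave_general n E s t hst v i j
end

section
/- Let v_1 = (1,0), v_2 = (0,1), v_3 = (1,1), v_4 = (2,1), v_5 = (3,1), v_6 = (3,2) in ℤ² (the positive roots of the root system G2 written in the basis of the simple roots α = (1,0) and β = (0,1)), and let K : ℤ² → ℕ send v to the number of 6-tuples (n_1,…,n_6) ∈ ℕ⁶ with ∑_{r=1}^6 n_r·v_r = v. Then K(4,4) = 13, K(5,5) = 20, and K(6,6) = 31; in particular K(5,5)² < K(4,4)·K(6,6), so the Kostant partition function of type G2 is not discretely log-concave. -/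
open Finset

/-- The positive roots of `G₂`, written in the basis of the simple roots
`α = (1,0)` (short) and `β = (0,1)` (long):
`α, β, α+β, 2α+β, 3α+β, 3α+2β`. -/
def g2Roots : Fin 6 → ℤ × ℤ := ![(1, 0), (0, 1), (1, 1), (2, 1), (3, 1), (3, 2)]

/-- The Kostant partition function of type `G₂`: the number of 6-tuples
`(n_1,…,n_6) ∈ ℕ⁶` with `∑ n_r v_r = v`. -/
noncomputable def kostantG2 (v : ℤ × ℤ) : ℕ :=
  Set.ncard {c : Fin 6 → ℕ | ∑ r, (c r : ℤ) • g2Roots r = v}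

/-!
Once the multiplicities of the four non-simple roots are fixed, those of the simple roots `α` and
`β` are forced: they are the two coordinates of the slack. So `K(a, b)` counts the lattice points
of a polytope in `ℕ⁴`, and a direct enumeration gives `13, 20, 31`, with `20² = 400 < 403`.
-/

/-- The multiplicities `(n₃, n₄, n₅, n₆)` of `α+β, 2α+β, 3α+β, 3α+2β` in partitions of `(a, b)`;
the bound `a` on each coordinate only makes the search finite. -/
def g2NonsimpleMults (a b : ℕ) : Finset (ℕ × ℕ × ℕ × ℕ) :=
  (range (a + 1) ×ˢ range (a + 1) ×ˢ range (a + 1) ×ˢ range (a + 1)).filter fun p =>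
    p.1 + 2 * p.2.1 + 3 * p.2.2.1 + 3 * p.2.2.2 ≤ a ∧ p.1 + p.2.1 + p.2.2.1 + 2 * p.2.2.2 ≤ b

def g2Completion (a b : ℕ) (p : ℕ × ℕ × ℕ × ℕ) : Fin 6 → ℕ :=
  ![a - (p.1 + 2 * p.2.1 + 3 * p.2.2.1 + 3 * p.2.2.2), b - (p.1 + p.2.1 + p.2.2.1 + 2 * p.2.2.2),
    p.1, p.2.1, p.2.2.1, p.2.2.2]

theorem sum_smul_g2Roots (c : Fin 6 → ℕ) :
    ∑ r, (c r : ℤ) • g2Roots r =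
      (↑(c 0 + c 2 + 2 * c 3 + 3 * c 4 + 3 * c 5), ↑(c 1 + c 2 + c 3 + c 4 + 2 * c 5)) := by
  simp only [Fin.sum_univ_six, g2Roots, Matrix.cons_val, Prod.smul_mk, Prod.mk_add_mk, smul_eq_mul]
  push_cast
  congr 1 <;> ring

theorem g2Completion_injective (a b : ℕ) : Function.Injective (g2Completion a b) := by
  rintro ⟨x, y, z, w⟩ ⟨x', y', z', w'⟩ h
  simp_all [g2Completion, funext_iff, Fin.forall_fin_succ]

theorem setOf_sum_smul_g2Roots_eq (a b : ℕ) :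
    {c : Fin 6 → ℕ | ∑ r, (c r : ℤ) • g2Roots r = ((a : ℤ), (b : ℤ))} =
      g2Completion a b '' g2NonsimpleMults a b := by
  ext c
  simp only [Set.mem_ofPred_eq, sum_smul_g2Roots, Prod.mk.injEq, Nat.cast_inj, Set.mem_image,
    mem_coe, g2NonsimpleMults, mem_filter, mem_product, mem_range, Nat.lt_succ_iff]
  constructor
  · rintro ⟨ha, hb⟩
    refine ⟨(c 2, c 3, c 4, c 5), by dsimp only; omega, ?_⟩
    funext i
    fin_cases i
    · show a - (c 2 + 2 * c 3 + 3 * c 4 + 3 * c 5) = c 0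
      omega
    · show b - (c 2 + c 3 + c 4 + 2 * c 5) = c 1
      omega
    all_goals rfl
  · rintro ⟨⟨x, y, z, w⟩, ⟨-, ha, hb⟩, rfl⟩
    dsimp only at ha hb
    simp only [g2Completion, Matrix.cons_val_zero, Matrix.cons_val, Matrix.cons_val_one]
    omega

theorem kostantG2_eq_card (a b : ℕ) : kostantG2 (a, b) = (g2NonsimpleMults a b).card := by
  rw [kostantG2, setOf_sum_smul_g2Roots_eq,
    Set.ncard_image_of_injective _ (g2Completion_injective a b), Set.ncard_coe_finset]

set_option maxRecDepth 10000 in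
/-- The Kostant partition function of type `G₂` takes the values
`13, 20, 31` at `4(α+β), 5(α+β), 6(α+β)`; since `20² < 13·31`, it is not
discretely log-concave. -/
theorem g2_kostant_not_log_concave :
    kostantG2 (4, 4) = 13 ∧ kostantG2 (5, 5) = 20 ∧ kostantG2 (6, 6) = 31 ∧
    kostantG2 (5, 5) ^ 2 < kostantG2 (4, 4) * kostantG2 (6, 6) := by
  have h4 : kostantG2 (4, 4) = 13 := by exact_mod_cast (kostantG2_eq_card 4 4).trans (by decide)
  have h5 : kostantG2 (5, 5) = 20 := by exact_mod_cast (kostantG2_eq_card 5 5).trans (by decide)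
  have h6 : kostantG2 (6, 6) = 31 := by exact_mod_cast (kostantG2_eq_card 6 6).trans (by decide)
  refine ⟨h4, h5, h6, ?_⟩
  rw [h4, h5, h6]
  norm_num
end

section
/- Let n ≥ 2 and k ≥ 2 be integers and b ≥ 13/2 a real number. Let p ∈ ℝ[x_0,…,x_n] be p = b²·x_0² + ∑_{i=1}^n x_i² + b·∑_{0≤i<j≤n} x_i x_j. Let S ⊆ ℕ^{n+1} be a finite M-convex set all of whose elements have coordinate sum k and which contains the exponent vectors of the six monomials x_1^k, x_1^{k−1}x_0, x_1^{k−1}x_2, x_1^{k−2}x_0², x_1^{k−2}x_0x_2, x_1^{k−2}x_2², and set q_S = ∑_{μ∈S} x^μ. Then p and q_S are both ADLC, but p·q_S is not ADLC: the coefficients of x_1^k x_0², x_1^k x_0 x_2, and x_1^k x_2² in p·q_S equal b²+b+1, 3b+1, and b+2 respectively, and (3b+1)² < (b+2)·(b²+b+1). -/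
/-!
ADLC amounts to `c(ν + 2eᵢ) c(ν + 2eⱼ) ≤ c(ν + eᵢ + eⱼ)²` for all `ν` and `i ≠ j`. For `q_S` this
is the exchange property of the M-convex set `S`. The quadratic form `p` is homogeneous, so only
`ν = 0` matters, where the inequality reads `b²·1 ≤ b²` or `1·1 ≤ b²`. The three coefficients of
`p·q_S` only involve the six monomials of `p` in `x₀, x₁, x₂` and the six given points of `S`,
and `(b + 2)(b² + b + 1) - (3b + 1)² = b³ - 6b² - 3b + 1` is positive for `b ≥ 13/2`.
-/

open Finset MvPolynomial

/-- The coefficient of a polynomial at an integer exponent vector: the usual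
coefficient if all coordinates are nonnegative, and `0` otherwise. -/
noncomputable def coeffZ {m : ℕ} (h : MvPolynomial (Fin m) ℝ) (mu : Fin m → ℤ) : ℝ :=
  if H : ∀ k, 0 ≤ mu k then
    h.coeff (Finsupp.equivFunOnFinite.symm fun k => (mu k).toNat)
  else 0

noncomputable def ADLC {m : ℕ} (h : MvPolynomial (Fin m) ℝ) : Prop :=
  ∀ (mu : Fin m → ℕ) (i j : Fin m),
    coeffZ h ((fun k => (mu k : ℤ)) + Pi.single i 1 - Pi.single j 1) *
        coeffZ h ((fun k => (mu k : ℤ)) - Pi.single i 1 + Pi.single j 1)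
      ≤ h.coeff (Finsupp.equivFunOnFinite.symm mu) ^ 2

def MConvex {m : ℕ} (S : Finset (Fin m →₀ ℕ)) : Prop :=
  ∀ a ∈ S, ∀ b ∈ S, a ≠ b → ∀ i : Fin m, b i < a i →
    ∃ j : Fin m, a j < b j ∧ a - Finsupp.single i 1 + Finsupp.single j 1 ∈ S

open Finsupp (single single_apply single_add equivFunOnFinite)

section Finsupp

variable {σ : Type*}

lemma single_two_eq_add (c : σ) : single c 2 = single c 1 + single c 1 := by
  rw [← single_add]

lemma single_one_add_single_one_inj {a a' c c' : σ} :
    single a 1 + single a' 1 = (single c 1 + single c' 1 : σ →₀ ℕ) ↔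
      a = c ∧ a' = c' ∨ a = c' ∧ a' = c := by
  simp [Finsupp.single_add_single_eq_single_add_single]

lemma single_one_add_single_one_le_iff {a c : σ} (hac : a ≠ c) {d : σ →₀ ℕ} :
    single a 1 + single c 1 ≤ d ↔ 1 ≤ d a ∧ 1 ≤ d c := by
  classical
  simp only [Finsupp.le_def, Finsupp.coe_add, Pi.add_apply, single_apply]
  refine ⟨fun h => ?_, fun h l => ?_⟩
  · have ha := h a
    have hc := h c
    grind
  · grind

end Finsupp

section ADLC

variable {m : ℕ}

lemma coeffZ_natCast (h : MvPolynomial (Fin m) ℝ) (u : Fin m →₀ ℕ) :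
    coeffZ h (fun k => (u k : ℤ)) = h.coeff u := by
  rw [coeffZ, dif_pos fun k => Int.natCast_nonneg _]
  congr 1
  ext l
  simp

lemma coeffZ_of_neg (h : MvPolynomial (Fin m) ℝ) {mu : Fin m → ℤ} {l : Fin m} (hl : mu l < 0) :
    coeffZ h mu = 0 :=
  dif_neg fun H => (H l).not_gt hl

lemma coeffZ_add_single_sub_single (h : MvPolynomial (Fin m) ℝ) (ν : Fin m →₀ ℕ)
    {i j : Fin m} (hij : i ≠ j) :
    coeffZ h ((fun k => ((ν + single i 1 + single j 1 : Fin m →₀ ℕ) k : ℤ))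
        + Pi.single i 1 - Pi.single j 1) = h.coeff (ν + single i 2) := by
  rw [← coeffZ_natCast]
  congr 1
  funext l
  simp only [Pi.add_apply, Pi.sub_apply, Finsupp.coe_add, single_apply, Pi.single_apply]
  grind

theorem adlc_iff (h : MvPolynomial (Fin m) ℝ) :
    ADLC h ↔ ∀ (ν : Fin m →₀ ℕ) (i j : Fin m), i ≠ j →
      h.coeff (ν + single i 2) * h.coeff (ν + single j 2)
        ≤ h.coeff (ν + single i 1 + single j 1) ^ 2 := by
  have swap : ∀ (ν : Fin m →₀ ℕ) (i j : Fin m), i ≠ j →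
      coeffZ h ((fun k => ((ν + single i 1 + single j 1 : Fin m →₀ ℕ) k : ℤ))
        - Pi.single i 1 + Pi.single j 1) = h.coeff (ν + single j 2) := fun ν i j hij => by
    rw [sub_add_eq_add_sub, add_right_comm ν, coeffZ_add_single_sub_single h ν hij.symm]
  constructor
  · intro hA ν i j hij
    have := hA ⇑(ν + single i 1 + single j 1 : Fin m →₀ ℕ) i j
    rwa [coeffZ_add_single_sub_single h ν hij, swap ν i j hij,
      Finsupp.equivFunOnFinite_symm_coe] at this
  · intro H mu i j
    by_cases hij : i = j
    · subst hij
      rw [add_sub_cancel_right, sub_add_cancel, ← sq]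
      exact (congrArg (· ^ 2) (coeffZ_natCast h (equivFunOnFinite.symm mu))).le
    obtain hj | hj := Nat.eq_zero_or_pos (mu j)
    · rw [coeffZ_of_neg h (l := j) (by simp [hij, hj]), zero_mul]
      positivity
    obtain hi | hi := Nat.eq_zero_or_pos (mu i)
    · rw [coeffZ_of_neg h (mu := (fun k => (mu k : ℤ)) - Pi.single i 1 + Pi.single j 1) (l := i)
        (by simp [hij, hi]), mul_zero]
      positivity
    obtain ⟨ν, rfl⟩ : ∃ ν : Fin m →₀ ℕ, mu = DFunLike.coe (ν + single i 1 + single j 1) := by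
      refine ⟨equivFunOnFinite.symm mu - single i 1 - single j 1, funext fun l => ?_⟩
      simp only [Finsupp.coe_add, Finsupp.coe_tsub, Pi.add_apply, Pi.sub_apply, single_apply,
        Finsupp.coe_equivFunOnFinite_symm]
      grind
    rw [coeffZ_add_single_sub_single h ν hij, swap ν i j hij, Finsupp.equivFunOnFinite_symm_coe]
    exact H ν i j hij

end ADLC

section MConvex

variable {m : ℕ}

noncomputable def genPoly (S : Finset (Fin m →₀ ℕ)) : MvPolynomial (Fin m) ℝ :=
  ∑ mu ∈ S, monomial mu 1

lemma coeff_genPoly (S : Finset (Fin m →₀ ℕ)) (u : Fin m →₀ ℕ) :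
    (genPoly S).coeff u = if u ∈ S then 1 else 0 := by
  simp [genPoly, coeff_sum, coeff_monomial]

lemma MConvex.add_single_add_single_mem {S : Finset (Fin m →₀ ℕ)} (hM : MConvex S)
    {ν : Fin m →₀ ℕ} {i j : Fin m} (hij : i ≠ j) (hi : ν + single i 2 ∈ S)
    (hj : ν + single j 2 ∈ S) : ν + single i 1 + single j 1 ∈ S := by
  have hlt : (ν + single j 2 : Fin m →₀ ℕ) i < (ν + single i 2 : Fin m →₀ ℕ) i := by
    simp [hij.symm]
  obtain ⟨j', hj', hmem⟩ := hM _ hi _ hj (fun he => hlt.ne (he ▸ rfl)) i hlt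
  obtain rfl : j' = j := by
    by_contra hne
    simp only [Finsupp.coe_add, Pi.add_apply, single_apply] at hj'
    grind
  convert hmem using 1
  ext l
  simp only [Finsupp.coe_add, Finsupp.coe_tsub, Pi.add_apply, Pi.sub_apply, single_apply]
  grind

lemma adlc_genPoly {S : Finset (Fin m →₀ ℕ)} (hM : MConvex S) : ADLC (genPoly S) := by
  refine (adlc_iff _).2 fun ν i j hij => ?_
  simp only [coeff_genPoly]
  by_cases hi : ν + single i 2 ∈ S
  · by_cases hj : ν + single j 2 ∈ S
    · simp [hi, hj, hM.add_single_add_single_mem hij hi hj]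
    · rw [if_neg hj, mul_zero]
      positivity
  · rw [if_neg hi, zero_mul]
    positivity

end MConvex

noncomputable def quadP (n : ℕ) (b : ℝ) : MvPolynomial (Fin (n + 1)) ℝ :=
  C (b ^ 2) * X 0 ^ 2 + (∑ i : Fin n, X i.succ ^ 2) +
    C b * ∑ q ∈ Finset.univ.filter
      (fun q : Fin (n + 1) × Fin (n + 1) => q.1 < q.2), X q.1 * X q.2

section quadP

variable {n : ℕ} {b : ℝ}

lemma quadP_eq_sum_monomial (n : ℕ) (b : ℝ) : quadP n b =
    ∑ a, monomial (single a 2) (if a = 0 then b ^ 2 else 1) +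
      ∑ q ∈ univ.filter (fun q : Fin (n + 1) × Fin (n + 1) => q.1 < q.2),
        monomial (single q.1 1 + single q.2 1) b := by
  simp only [quadP, X_pow_eq_monomial, C_mul_monomial, Finset.mul_sum]
  simp [X, monomial_mul, C_mul_monomial, Fin.sum_univ_succ]

lemma isHomogeneous_quadP (n : ℕ) (b : ℝ) : (quadP n b).IsHomogeneous 2 := by
  rw [quadP_eq_sum_monomial]
  refine .add (.sum _ _ _ fun a _ => isHomogeneous_monomial _ ?_)
    (.sum _ _ _ fun q _ => isHomogeneous_monomial _ ?_) <;> simp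

lemma coeff_quadP_single_two (c : Fin (n + 1)) :
    (quadP n b).coeff (single c 2) = if c = 0 then b ^ 2 else 1 := by
  simp only [quadP_eq_sum_monomial, coeff_add, coeff_sum, coeff_monomial,
    Finsupp.single_left_inj two_ne_zero, sum_ite_eq', mem_univ, if_true]
  refine (add_eq_left.2 <| sum_eq_zero fun q hq => if_neg ?_)
  rw [single_two_eq_add, single_one_add_single_one_inj]
  have := (mem_filter.1 hq).2
  grind

lemma coeff_quadP_pair {i j : Fin (n + 1)} (hij : i < j) :
    (quadP n b).coeff (single i 1 + single j 1) = b := by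
  simp only [quadP_eq_sum_monomial, coeff_add, coeff_sum, coeff_monomial, single_two_eq_add,
    single_one_add_single_one_inj]
  rw [sum_eq_zero, zero_add, sum_eq_single_of_mem (i, j) (by simpa using hij),
    if_pos (.inl ⟨rfl, rfl⟩)]
  · intro q hq hne
    have := (mem_filter.1 hq).2
    rw [if_neg]
    grind
  · intro a _
    rw [if_neg]
    grind

lemma adlc_quadP (hb : 1 ≤ b ^ 2) : ADLC (quadP n b) := by
  refine (adlc_iff _).2 fun ν i j hij => ?_
  wlog hlt : i < j generalizing i j
  · have := this j i hij.symm (hij.symm.lt_of_le (not_lt.1 hlt))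
    rwa [mul_comm, add_right_comm] at this
  obtain rfl | hν := eq_or_ne ν 0
  · simp only [zero_add, coeff_quadP_single_two, coeff_quadP_pair hlt, if_neg (pos_of_gt hlt).ne']
    split_ifs <;> linarith
  · have : (quadP n b).coeff (ν + single i 2) = 0 := (isHomogeneous_quadP n b).coeff_eq_zero <| by
      simpa [Finsupp.degree_eq_zero_iff] using hν
    rw [this, zero_mul]
    positivity

lemma coeff_quadP_mul_of_support {i j : Fin (n + 1)} (hi : 0 < i) (hij : i < j)
    (f : MvPolynomial (Fin (n + 1)) ℝ) {d : Fin (n + 1) →₀ ℕ}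
    (hd : ∀ l, l ≠ 0 → l ≠ i → l ≠ j → d l = 0) :
    (quadP n b * f).coeff d =
      (if single 0 2 ≤ d then b ^ 2 * f.coeff (d - single 0 2) else 0) +
      (if single i 2 ≤ d then f.coeff (d - single i 2) else 0) +
      (if single j 2 ≤ d then f.coeff (d - single j 2) else 0) +
      (if single 0 1 + single i 1 ≤ d then b * f.coeff (d - (single 0 1 + single i 1)) else 0) +
      (if single 0 1 + single j 1 ≤ d then b * f.coeff (d - (single 0 1 + single j 1)) else 0) +
      (if single i 1 + single j 1 ≤ d then b * f.coeff (d - (single i 1 + single j 1)) else 0) := by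
  have hj := hi.trans hij
  simp only [quadP_eq_sum_monomial, add_mul, Finset.sum_mul, coeff_add, coeff_sum,
    coeff_monomial_mul']
  rw [← sum_subset (subset_univ {0, i, j}) fun a _ ha => if_neg ?_,
    ← sum_subset (s₁ := {(0, i), (0, j), (i, j)}) ?_ fun q hq hq' => if_neg ?_]
  · simp [sum_insert, hi.ne, hij.ne, hj.ne, hi.ne', hj.ne', add_assoc]
  · intro q hq
    simp only [mem_insert, mem_singleton] at hq
    simp only [mem_filter, mem_univ, true_and]
    grind
  · have := (mem_filter.1 hq).2
    rw [single_one_add_single_one_le_iff this.ne]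
    simp only [mem_insert, mem_singleton] at hq'
    grind
  · rw [Finsupp.single_le_iff, hd a] <;> grind

lemma coeff_quadP_mul_genPoly_add_single_zero_two {i j : Fin (n + 1)} (hi : 0 < i) (hij : i < j)
    {k : ℕ} (hk : 2 ≤ k) {S : Finset (Fin (n + 1) →₀ ℕ)} (h₀ : single i k ∈ S)
    (h₁ : single i (k - 1) + single 0 1 ∈ S) (h₂ : single i (k - 2) + single 0 2 ∈ S) :
    (quadP n b * genPoly S).coeff (single i k + single 0 2) = b ^ 2 + b + 1 := by
  have hj := hi.trans hij
  have e₁ : single i k + single 0 2 - single i 2 = single i (k - 2) + single 0 2 := by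
    ext l; simp [single_apply]; grind
  have e₂ : single i k + single 0 2 - (single 0 1 + single i 1) = single i (k - 1) + single 0 1 := by
    ext l; simp [single_apply]; grind
  rw [coeff_quadP_mul_of_support hi hij _ (by intro l; simp [single_apply]; grind), e₁, e₂]
  simp [hi.ne, hi.ne', hij.ne, hij.ne', hj.ne, hj.ne', Finsupp.single_le_iff,
    single_one_add_single_one_le_iff, coeff_genPoly, h₀, h₁, h₂, hk, one_le_two.trans hk,
    -Finsupp.single_tsub]
  ring

lemma coeff_quadP_mul_genPoly_add_single_zero_add_single {i j : Fin (n + 1)} (hi : 0 < i)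
    (hij : i < j) {k : ℕ} (hk : 2 ≤ k) {S : Finset (Fin (n + 1) →₀ ℕ)} (h₀ : single i k ∈ S)
    (h₁ : single i (k - 1) + single 0 1 ∈ S) (h₂ : single i (k - 1) + single j 1 ∈ S)
    (h₃ : single i (k - 2) + single 0 1 + single j 1 ∈ S) :
    (quadP n b * genPoly S).coeff (single i k + single 0 1 + single j 1) = 3 * b + 1 := by
  have hj := hi.trans hij
  have e₁ : single i k + single 0 1 + single j 1 - single i 2
      = single i (k - 2) + single 0 1 + single j 1 := by
    ext l; simp [single_apply]; grind
  have e₂ : single i k + single 0 1 + single j 1 - (single 0 1 + single i 1)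
      = single i (k - 1) + single j 1 := by
    ext l; simp [single_apply]; grind
  have e₃ : single i k + single 0 1 + single j 1 - (single 0 1 + single j 1) = single i k := by
    ext l; simp [single_apply]; grind
  have e₄ : single i k + single 0 1 + single j 1 - (single i 1 + single j 1)
      = single i (k - 1) + single 0 1 := by
    ext l; simp [single_apply]; grind
  rw [coeff_quadP_mul_of_support hi hij _ (by intro l; simp [single_apply]; grind),
    e₁, e₂, e₃, e₄]
  simp [hi.ne, hi.ne', hij.ne, hij.ne', hj.ne, hj.ne', Finsupp.single_le_iff,
    single_one_add_single_one_le_iff, coeff_genPoly, h₀, h₁, h₂, h₃, hk, one_le_two.trans hk,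
    -Finsupp.single_tsub]
  ring

lemma coeff_quadP_mul_genPoly_add_single_two {i j : Fin (n + 1)} (hi : 0 < i) (hij : i < j)
    {k : ℕ} (hk : 2 ≤ k) {S : Finset (Fin (n + 1) →₀ ℕ)} (h₀ : single i k ∈ S)
    (h₁ : single i (k - 1) + single j 1 ∈ S) (h₂ : single i (k - 2) + single j 2 ∈ S) :
    (quadP n b * genPoly S).coeff (single i k + single j 2) = b + 2 := by
  have hj := hi.trans hij
  have e₁ : single i k + single j 2 - single i 2 = single i (k - 2) + single j 2 := by
    ext l; simp [single_apply]; grind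
  have e₂ : single i k + single j 2 - (single i 1 + single j 1) = single i (k - 1) + single j 1 := by
    ext l; simp [single_apply]; grind
  rw [coeff_quadP_mul_of_support hi hij _ (by intro l; simp [single_apply]; grind), e₁, e₂]
  simp [hi.ne, hij.ne, hij.ne', hj.ne, Finsupp.single_le_iff,
    single_one_add_single_one_le_iff, coeff_genPoly, h₀, h₁, h₂, hk, one_le_two.trans hk,
    -Finsupp.single_tsub]
  ring

end quadP

theorem product_of_ADLC_not_ADLC_general (n k : ℕ) (hn : 2 ≤ n) (hk : 2 ≤ k)
    (b : ℝ) (hb : 13 / 2 ≤ b)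
    (S : Finset (Fin (n + 1) →₀ ℕ))
    (hS1 : Finsupp.single (1 : Fin (n + 1)) k ∈ S)
    (hS2 : Finsupp.single (1 : Fin (n + 1)) (k - 1) + Finsupp.single 0 1 ∈ S)
    (hS3 : Finsupp.single (1 : Fin (n + 1)) (k - 1) + Finsupp.single 2 1 ∈ S)
    (hS4 : Finsupp.single (1 : Fin (n + 1)) (k - 2) + Finsupp.single 0 2 ∈ S)
    (hS5 : Finsupp.single (1 : Fin (n + 1)) (k - 2) + Finsupp.single 0 1
            + Finsupp.single 2 1 ∈ S)
    (hS6 : Finsupp.single (1 : Fin (n + 1)) (k - 2) + Finsupp.single 2 2 ∈ S)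
    (hM : MConvex S) :
    let p : MvPolynomial (Fin (n + 1)) ℝ :=
      C (b ^ 2) * X 0 ^ 2 + (∑ i : Fin n, X i.succ ^ 2) +
        C b * ∑ q ∈ Finset.univ.filter
          (fun q : Fin (n + 1) × Fin (n + 1) => q.1 < q.2), X q.1 * X q.2
    let qS : MvPolynomial (Fin (n + 1)) ℝ := ∑ mu ∈ S, monomial mu (1 : ℝ)
    ADLC p ∧ ADLC qS ∧ ¬ ADLC (p * qS) ∧
    (p * qS).coeff (Finsupp.single 1 k + Finsupp.single 0 2) = b ^ 2 + b + 1 ∧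
    (p * qS).coeff (Finsupp.single 1 k + Finsupp.single 0 1 + Finsupp.single 2 1)
      = 3 * b + 1 ∧
    (p * qS).coeff (Finsupp.single 1 k + Finsupp.single 2 2) = b + 2 ∧
    (3 * b + 1) ^ 2 < (b + 2) * (b ^ 2 + b + 1) := by
  intro p qS
  obtain ⟨h01, h12⟩ : (0 : Fin (n + 1)) < 1 ∧ (1 : Fin (n + 1)) < 2 := by
    simp only [Fin.lt_def]
    simp [Nat.mod_eq_of_lt (show 1 < n + 1 by omega), Nat.mod_eq_of_lt (show 2 < n + 1 by omega)]
  have c₁ : (p * qS).coeff (single 1 k + single 0 2) = b ^ 2 + b + 1 :=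
    coeff_quadP_mul_genPoly_add_single_zero_two h01 h12 hk hS1 hS2 hS4
  have c₂ : (p * qS).coeff (single 1 k + single 0 1 + single 2 1) = 3 * b + 1 :=
    coeff_quadP_mul_genPoly_add_single_zero_add_single h01 h12 hk hS1 hS2 hS3 hS5
  have c₃ : (p * qS).coeff (single 1 k + single 2 2) = b + 2 :=
    coeff_quadP_mul_genPoly_add_single_two h01 h12 hk hS1 hS3 hS6
  have hlt : (3 * b + 1) ^ 2 < (b + 2) * (b ^ 2 + b + 1) := by
    nlinarith [mul_nonneg (sub_nonneg.2 hb) (sq_nonneg b)]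
  refine ⟨adlc_quadP (by nlinarith), adlc_genPoly hM, fun hA => ?_, c₁, c₂, c₃, hlt⟩
  have := (adlc_iff _).1 hA (single 1 k) 0 2 (h01.trans h12).ne
  rw [c₁, c₂, c₃] at this
  linarith

/-- For `b ≥ 13/2`, the ADLC polynomial
`p = b²x_0² + ∑_{i=1}^n x_i² + b ∑_{i<j} x_i x_j` and the ADLC polynomial
`q_S = ∑_{μ ∈ S} x^μ` (for `S` M-convex, homogeneous of degree `k`, containing
the six listed exponents) have a non-ADLC product: the coefficients of
`x_1^k x_0²`, `x_1^k x_0 x_2`, `x_1^k x_2²` in `p·q_S` are `b²+b+1`, `3b+1`,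
`b+2`, and `(3b+1)² < (b+2)(b²+b+1)`. -/
theorem product_of_ADLC_not_ADLC (n k : ℕ) (hn : 2 ≤ n) (hk : 2 ≤ k)
    (b : ℝ) (hb : 13 / 2 ≤ b)
    (S : Finset (Fin (n + 1) →₀ ℕ))
    (hSdeg : ∀ mu ∈ S, ∑ i, mu i = k)
    (hS1 : Finsupp.single (1 : Fin (n + 1)) k ∈ S)
    (hS2 : Finsupp.single (1 : Fin (n + 1)) (k - 1) + Finsupp.single 0 1 ∈ S)
    (hS3 : Finsupp.single (1 : Fin (n + 1)) (k - 1) + Finsupp.single 2 1 ∈ S)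
    (hS4 : Finsupp.single (1 : Fin (n + 1)) (k - 2) + Finsupp.single 0 2 ∈ S)
    (hS5 : Finsupp.single (1 : Fin (n + 1)) (k - 2) + Finsupp.single 0 1
            + Finsupp.single 2 1 ∈ S)
    (hS6 : Finsupp.single (1 : Fin (n + 1)) (k - 2) + Finsupp.single 2 2 ∈ S)
    (hM : MConvex S) :
    let p : MvPolynomial (Fin (n + 1)) ℝ :=
      C (b ^ 2) * X 0 ^ 2 + (∑ i : Fin n, X i.succ ^ 2) +
        C b * ∑ q ∈ Finset.univ.filter
          (fun q : Fin (n + 1) × Fin (n + 1) => q.1 < q.2), X q.1 * X q.2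
    let qS : MvPolynomial (Fin (n + 1)) ℝ := ∑ mu ∈ S, monomial mu (1 : ℝ)
    ADLC p ∧ ADLC qS ∧ ¬ ADLC (p * qS) ∧
    (p * qS).coeff (Finsupp.single 1 k + Finsupp.single 0 2) = b ^ 2 + b + 1 ∧
    (p * qS).coeff (Finsupp.single 1 k + Finsupp.single 0 1 + Finsupp.single 2 1)
      = 3 * b + 1 ∧
    (p * qS).coeff (Finsupp.single 1 k + Finsupp.single 2 2) = b + 2 ∧
    (3 * b + 1) ^ 2 < (b + 2) * (b ^ 2 + b + 1) :=
  product_of_ADLC_not_ADLC_general n k hn hk b hb S hS1 hS2 hS3 hS4 hS5 hS6 hM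
end

section
/- Let a, b > 0 and t > 2b + a be real numbers and k ≥ 2 an integer. Define p_{b,t} ∈ ℝ[x,y,z] by p_{b,t} = b²·x²y² + b·x²yz + x²z² + b²·xy²z + b²·y²z² + t·xyz². Let q ∈ ℝ[x,y] be homogeneous of degree k with coefficient 1 on x^k, coefficient a on x^{k−1}y, and nonnegative coefficient c on x^{k−2}y². Then p_{b,t} is ADLC, but p_{b,t}·q is not ADLC: the coefficients of x^{k+2}y², x^{k+1}y²z, and x^k y²z² in p_{b,t}·q equal b², b²+ab, and b²+at+c respectively, and (b²+ab)² < b²·(b²+at+c). -/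
/-
The support of `p_{b,t}` is `x²y², x²yz, x²z², xy²z, y²z², xyz²`. Two support exponents
with even difference are equal or among `x²y², x²z², y²z²`, and the midpoints `x²yz, xy²z, xyz²`
carry `b, b², t`, so ADLC of `p_{b,t}` reduces to `b²·1 ≤ b²`, `b²·b² ≤ (b²)²`, `1·b² ≤ t²`.
Since `q` has no `z`, the coefficients of `x^{k+2}y², x^{k+1}y²z, x^k y²z²` in `p_{b,t}·q` come
only from `b²x²y²·x^k`, from `bx²yz·ax^{k-1}y + b²xy²z·x^k`, and from
`x²z²·cx^{k-2}y² + txyz²·ax^{k-1}y + b²y²z²·x^k`. Then `t > 2b + a` gives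
`(b² + ab)² = b²(b + a)² < b²(b² + at + c)`: ADLC fails at `x^{k+1}y²z` in direction `e_x - e_z`.
-/

open Finset MvPolynomial

lemma coeffZ_eq_coeff {m : ℕ} (h : MvPolynomial (Fin m) ℝ) {ν : Fin m → ℤ} {μ : Fin m →₀ ℕ}
    (hν : ∀ i, ν i = μ i) : coeffZ h ν = h.coeff μ := by
  rw [coeffZ, dif_pos fun i => hν i ▸ Int.natCast_nonneg _]
  congr
  ext i
  simp [hν]

lemma ADLC_of_coeffZ_mul_le {m : ℕ} {h : MvPolynomial (Fin m) ℝ}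
    (H : ∀ ν d : Fin m → ℤ, coeffZ h (ν + d) * coeffZ h (ν - d) ≤ coeffZ h ν ^ 2) :
    ADLC h := by
  intro mu i j
  convert H (fun k => (mu k : ℤ)) (Pi.single i 1 - Pi.single j 1) using 2
  · rw [add_sub_assoc]
  · rw [sub_sub_eq_add_sub, add_sub_right_comm]
  · rw [coeffZ_eq_coeff h (μ := Finsupp.equivFunOnFinite.symm mu) (by simp)]

noncomputable def xyz (a b c : ℕ) : Fin 3 →₀ ℕ :=
  Finsupp.single 0 a + Finsupp.single 1 b + Finsupp.single 2 c

@[simp] lemma xyz_apply_zero (a b c : ℕ) : xyz a b c 0 = a := by simp [xyz]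
@[simp] lemma xyz_apply_one (a b c : ℕ) : xyz a b c 1 = b := by simp [xyz]
@[simp] lemma xyz_apply_two (a b c : ℕ) : xyz a b c 2 = c := by simp [xyz]

lemma eq_xyz_iff {m : Fin 3 →₀ ℕ} {a b c : ℕ} :
    m = xyz a b c ↔ m 0 = a ∧ m 1 = b ∧ m 2 = c := by
  refine ⟨by rintro rfl; simp, fun ⟨h0, h1, h2⟩ => ?_⟩
  ext i; fin_cases i <;> simpa

lemma xyz_eq_iff {m : Fin 3 →₀ ℕ} {a b c : ℕ} : xyz a b c = m ↔ m 0 = a ∧ m 1 = b ∧ m 2 = c :=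
  eq_comm.trans eq_xyz_iff

lemma xyz_le_xyz_iff {a b c x y z : ℕ} : xyz a b c ≤ xyz x y z ↔ a ≤ x ∧ b ≤ y ∧ c ≤ z := by
  simp [Finsupp.le_def, Fin.forall_fin_succ]

lemma xyz_sub_xyz (a b c x y z : ℕ) : xyz x y z - xyz a b c = xyz (x - a) (y - b) (z - c) := by
  rw [eq_xyz_iff]; simp

noncomputable def pbt (b t : ℝ) : MvPolynomial (Fin 3) ℝ :=
  C (b ^ 2) * X 0 ^ 2 * X 1 ^ 2 + C b * X 0 ^ 2 * X 1 * X 2 +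
    X 0 ^ 2 * X 2 ^ 2 + C (b ^ 2) * X 0 * X 1 ^ 2 * X 2 +
    C (b ^ 2) * X 1 ^ 2 * X 2 ^ 2 + C t * X 0 * X 1 * X 2 ^ 2

lemma pbt_eq_sum_monomial (b t : ℝ) :
    pbt b t = monomial (xyz 2 2 0) (b ^ 2) + monomial (xyz 2 1 1) b + monomial (xyz 2 0 2) 1 +
      monomial (xyz 1 2 1) (b ^ 2) + monomial (xyz 0 2 2) (b ^ 2) + monomial (xyz 1 1 2) t := by
  simp only [pbt, X_pow_eq_monomial]
  simp only [xyz, X, C_mul_monomial, monomial_mul, Finsupp.single_zero, add_zero, zero_add,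
    mul_one]

noncomputable def pbtCoeff (b t : ℝ) (x y z : ℤ) : ℝ :=
  if x = 2 ∧ y = 2 ∧ z = 0 then b ^ 2
  else if x = 2 ∧ y = 1 ∧ z = 1 then b
  else if x = 2 ∧ y = 0 ∧ z = 2 then 1
  else if x = 1 ∧ y = 2 ∧ z = 1 then b ^ 2
  else if x = 0 ∧ y = 2 ∧ z = 2 then b ^ 2
  else if x = 1 ∧ y = 1 ∧ z = 2 then t
  else 0

lemma coeff_pbt (b t : ℝ) (x y z : ℕ) : coeff (xyz x y z) (pbt b t) = pbtCoeff b t x y z := by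
  unfold pbtCoeff
  split_ifs <;> norm_cast at * <;> simp [pbt_eq_sum_monomial, coeff_monomial, xyz_eq_iff, *]

lemma support_of_pbtCoeff_ne_zero {b t : ℝ} {x y z : ℤ} (h : pbtCoeff b t x y z ≠ 0) :
    (x = 2 ∧ y = 2 ∧ z = 0) ∨ (x = 2 ∧ y = 1 ∧ z = 1) ∨ (x = 2 ∧ y = 0 ∧ z = 2) ∨
      (x = 1 ∧ y = 2 ∧ z = 1) ∨ (x = 0 ∧ y = 2 ∧ z = 2) ∨ (x = 1 ∧ y = 1 ∧ z = 2) := by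
  unfold pbtCoeff at h
  split_ifs at h <;> simp_all

lemma coeffZ_pbt (b t : ℝ) (ν : Fin 3 → ℤ) :
    coeffZ (pbt b t) ν = pbtCoeff b t (ν 0) (ν 1) (ν 2) := by
  unfold coeffZ
  split_ifs with hν
  · have : Finsupp.equivFunOnFinite.symm (fun i => (ν i).toNat) =
        xyz (ν 0).toNat (ν 1).toNat (ν 2).toNat := by
      rw [eq_xyz_iff]; simp
    rw [this, coeff_pbt, Int.toNat_of_nonneg (hν 0), Int.toNat_of_nonneg (hν 1),
      Int.toNat_of_nonneg (hν 2)]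
  · push Not at hν
    obtain ⟨i, hi⟩ := hν
    by_contra h
    rcases support_of_pbtCoeff_ne_zero (Ne.symm h) with h | h | h | h | h | h <;>
      fin_cases i <;> simp at hi <;> omega

lemma pbtCoeff_mul_le_sq {b t : ℝ} (hbt : b ^ 2 ≤ t ^ 2) (x y z dx dy dz : ℤ) :
    pbtCoeff b t (x + dx) (y + dy) (z + dz) * pbtCoeff b t (x - dx) (y - dy) (z - dz) ≤
      pbtCoeff b t x y z ^ 2 := by
  by_cases h₁ : pbtCoeff b t (x + dx) (y + dy) (z + dz) = 0
  · rw [h₁, zero_mul]; positivity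
  by_cases h₂ : pbtCoeff b t (x - dx) (y - dy) (z - dz) = 0
  · rw [h₂, mul_zero]; positivity
  have hx : (x + dx) + (x - dx) = 2 * x := by ring
  have hy : (y + dy) + (y - dy) = 2 * y := by ring
  have hz : (z + dz) + (z - dz) = 2 * z := by ring
  generalize x + dx = x₁, y + dy = y₁, z + dz = z₁, x - dx = x₂, y - dy = y₂, z - dz = z₂ at *
  rcases support_of_pbtCoeff_ne_zero h₁ with
    ⟨rfl, rfl, rfl⟩ | ⟨rfl, rfl, rfl⟩ | ⟨rfl, rfl, rfl⟩ |
      ⟨rfl, rfl, rfl⟩ | ⟨rfl, rfl, rfl⟩ | ⟨rfl, rfl, rfl⟩ <;>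
  rcases support_of_pbtCoeff_ne_zero h₂ with
    ⟨rfl, rfl, rfl⟩ | ⟨rfl, rfl, rfl⟩ | ⟨rfl, rfl, rfl⟩ |
      ⟨rfl, rfl, rfl⟩ | ⟨rfl, rfl, rfl⟩ | ⟨rfl, rfl, rfl⟩ <;>
  first
  | omega
  | (norm_num [pbtCoeff]; split_ifs <;> first | omega | nlinarith)

lemma ADLC_pbt {b t : ℝ} (hbt : b ^ 2 ≤ t ^ 2) : ADLC (pbt b t) :=
  ADLC_of_coeffZ_mul_le fun ν d => by
    simpa only [coeffZ_pbt, Pi.add_apply, Pi.sub_apply] using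
      pbtCoeff_mul_le_sq hbt (ν 0) (ν 1) (ν 2) (d 0) (d 1) (d 2)

lemma coeff_pbt_mul_x2y2 {b t : ℝ} {k : ℕ} {q : MvPolynomial (Fin 3) ℝ}
    (hq0 : coeff (xyz k 0 0) q = 1) :
    coeff (xyz (k + 2) 2 0) (pbt b t * q) = b ^ 2 := by
  simp [pbt_eq_sum_monomial, add_mul, coeff_monomial_mul', xyz_le_xyz_iff, xyz_sub_xyz, hq0]

lemma coeff_pbt_mul_xy2z {a b t : ℝ} {k : ℕ} {q : MvPolynomial (Fin 3) ℝ}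
    (hqz : ∀ x y z, z ≠ 0 → coeff (xyz x y z) q = 0) (hk : 1 ≤ k)
    (hq0 : coeff (xyz k 0 0) q = 1) (hq1 : coeff (xyz (k - 1) 1 0) q = a) :
    coeff (xyz (k + 1) 2 1) (pbt b t * q) = b ^ 2 + a * b := by
  simp [pbt_eq_sum_monomial, add_mul, coeff_monomial_mul', xyz_le_xyz_iff, xyz_sub_xyz, hqz, hk,
    hq0, hq1]
  ring

lemma coeff_pbt_mul_y2z2 {a b c t : ℝ} {k : ℕ} {q : MvPolynomial (Fin 3) ℝ}
    (hqz : ∀ x y z, z ≠ 0 → coeff (xyz x y z) q = 0) (hk : 2 ≤ k)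
    (hq0 : coeff (xyz k 0 0) q = 1) (hq1 : coeff (xyz (k - 1) 1 0) q = a)
    (hq2 : coeff (xyz (k - 2) 2 0) q = c) :
    coeff (xyz k 2 2) (pbt b t * q) = b ^ 2 + a * t + c := by
  simp [pbt_eq_sum_monomial, add_mul, coeff_monomial_mul', xyz_le_xyz_iff, xyz_sub_xyz, hqz, hk,
    hq0, hq1, hq2, show 1 ≤ k by omega]
  ring

lemma not_ADLC_of_sq_coeff_lt {h : MvPolynomial (Fin 3) ℝ} (k : ℕ)
    (H : coeff (xyz (k + 1) 2 1) h ^ 2 < coeff (xyz (k + 2) 2 0) h * coeff (xyz k 2 2) h) :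
    ¬ ADLC h := by
  intro hA
  have := hA ![k + 1, 2, 1] 0 2
  rw [coeffZ_eq_coeff h (μ := xyz (k + 2) 2 0), coeffZ_eq_coeff h (μ := xyz k 2 2),
    show Finsupp.equivFunOnFinite.symm ![k + 1, 2, 1] = xyz (k + 1) 2 1 by
      rw [eq_xyz_iff]; simp] at this
  · linarith
  all_goals intro i; fin_cases i <;> simp <;> omega

theorem pbt_times_q_not_ADLC_general (a b t : ℝ) (ha : 0 < a) (hb : 0 < b)
    (ht : 2 * b + a < t) (k : ℕ) (hk : 2 ≤ k)
    (q : MvPolynomial (Fin 3) ℝ)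
    (hqxy : ∀ mu : Fin 3 →₀ ℕ, q.coeff mu ≠ 0 → mu 2 = 0)
    (hq0 : q.coeff (Finsupp.single 0 k) = 1)
    (hq1 : q.coeff (Finsupp.single 0 (k - 1) + Finsupp.single 1 1) = a)
    (c : ℝ) (hc : q.coeff (Finsupp.single 0 (k - 2) + Finsupp.single 1 2) = c)
    (hc0 : 0 ≤ c) :
    let p : MvPolynomial (Fin 3) ℝ :=
      C (b ^ 2) * X 0 ^ 2 * X 1 ^ 2 + C b * X 0 ^ 2 * X 1 * X 2 +
        X 0 ^ 2 * X 2 ^ 2 + C (b ^ 2) * X 0 * X 1 ^ 2 * X 2 +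
        C (b ^ 2) * X 1 ^ 2 * X 2 ^ 2 + C t * X 0 * X 1 * X 2 ^ 2
    ADLC p ∧ ¬ ADLC (p * q) ∧
    (p * q).coeff (Finsupp.single 0 (k + 2) + Finsupp.single 1 2) = b ^ 2 ∧
    (p * q).coeff (Finsupp.single 0 (k + 1) + Finsupp.single 1 2 + Finsupp.single 2 1)
      = b ^ 2 + a * b ∧
    (p * q).coeff (Finsupp.single 0 k + Finsupp.single 1 2 + Finsupp.single 2 2)
      = b ^ 2 + a * t + c ∧
    (b ^ 2 + a * b) ^ 2 < b ^ 2 * (b ^ 2 + a * t + c) := by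
  intro p
  rw [show p = pbt b t from rfl]
  have hqz : ∀ x y z, z ≠ 0 → coeff (xyz x y z) q = 0 := fun x y z hz =>
    by_contra fun hne => hz (by simpa using hqxy _ hne)
  have hq0' : coeff (xyz k 0 0) q = 1 := by simpa [xyz] using hq0
  have hq1' : coeff (xyz (k - 1) 1 0) q = a := by simpa [xyz] using hq1
  have hq2' : coeff (xyz (k - 2) 2 0) q = c := by simpa [xyz] using hc
  have h₁ : coeff (xyz (k + 2) 2 0) (pbt b t * q) = b ^ 2 := coeff_pbt_mul_x2y2 hq0'
  have h₂ : coeff (xyz (k + 1) 2 1) (pbt b t * q) = b ^ 2 + a * b :=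
    coeff_pbt_mul_xy2z hqz (by omega) hq0' hq1'
  have h₃ : coeff (xyz k 2 2) (pbt b t * q) = b ^ 2 + a * t + c :=
    coeff_pbt_mul_y2z2 hqz hk hq0' hq1' hq2'
  have hlt : (b ^ 2 + a * b) ^ 2 < b ^ 2 * (b ^ 2 + a * t + c) := by
    have : 0 < b ^ 2 * (a * (t - 2 * b - a) + c) :=
      mul_pos (by positivity) (add_pos_of_pos_of_nonneg (mul_pos ha (by linarith)) hc0)
    linarith
  refine ⟨ADLC_pbt (pow_le_pow_left₀ hb.le (by linarith) 2),
    not_ADLC_of_sq_coeff_lt k (by rwa [h₁, h₂, h₃]), by simpa [xyz] using h₁, h₂, h₃, hlt⟩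

/-- For `t > 2b + a`, the ADLC polynomial
`p_{b,t} = b²x²y² + bx²yz + x²z² + b²xy²z + b²y²z² + txyz²` times any
homogeneous `q(x,y) = x^k + a x^{k-1}y + c x^{k-2}y² + ⋯` (with `c ≥ 0`) is
not ADLC: the coefficients of `x^{k+2}y²`, `x^{k+1}y²z`, `x^k y²z²` in
`p_{b,t}·q` are `b²`, `b²+ab`, `b²+at+c`, and `(b²+ab)² < b²·(b²+at+c)`. -/
theorem pbt_times_q_not_ADLC (a b t : ℝ) (ha : 0 < a) (hb : 0 < b)
    (ht : 2 * b + a < t) (k : ℕ) (hk : 2 ≤ k)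
    (q : MvPolynomial (Fin 3) ℝ) (hqhom : q.IsHomogeneous k)
    (hqxy : ∀ mu : Fin 3 →₀ ℕ, q.coeff mu ≠ 0 → mu 2 = 0)
    (hq0 : q.coeff (Finsupp.single 0 k) = 1)
    (hq1 : q.coeff (Finsupp.single 0 (k - 1) + Finsupp.single 1 1) = a)
    (c : ℝ) (hc : q.coeff (Finsupp.single 0 (k - 2) + Finsupp.single 1 2) = c)
    (hc0 : 0 ≤ c) :
    let p : MvPolynomial (Fin 3) ℝ :=
      C (b ^ 2) * X 0 ^ 2 * X 1 ^ 2 + C b * X 0 ^ 2 * X 1 * X 2 +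
        X 0 ^ 2 * X 2 ^ 2 + C (b ^ 2) * X 0 * X 1 ^ 2 * X 2 +
        C (b ^ 2) * X 1 ^ 2 * X 2 ^ 2 + C t * X 0 * X 1 * X 2 ^ 2
    ADLC p ∧ ¬ ADLC (p * q) ∧
    (p * q).coeff (Finsupp.single 0 (k + 2) + Finsupp.single 1 2) = b ^ 2 ∧
    (p * q).coeff (Finsupp.single 0 (k + 1) + Finsupp.single 1 2 + Finsupp.single 2 1)
      = b ^ 2 + a * b ∧
    (p * q).coeff (Finsupp.single 0 k + Finsupp.single 1 2 + Finsupp.single 2 2)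
      = b ^ 2 + a * t + c ∧
    (b ^ 2 + a * b) ^ 2 < b ^ 2 * (b ^ 2 + a * t + c) :=
  pbt_times_q_not_ADLC_general a b t ha hb ht k hk q hqxy hq0 hq1 c hc hc0
end

section
/- Let S ⊆ ℕ^m be a finite M-convex set. Then the 0/1-coefficient polynomial q_S = ∑_{μ∈S} x^μ ∈ ℝ[x_1,…,x_m] is ADLC; equivalently, whenever μ ∈ ℤ^m and i, j ∈ {1,…,m} are such that both μ + e_i − e_j and μ − e_i + e_j lie in S, then μ ∈ S. -/
open Finset MvPolynomial

lemma key_lemma {m : ℕ} (S : Finset (Fin m →₀ ℕ)) (hM : MConvex S) (mu : Fin m → ℤ)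
    (i j : Fin m)
    (h1 : ∃ a ∈ S, (fun k => (a k : ℤ)) = mu + Pi.single i 1 - Pi.single j 1)
    (h2 : ∃ a ∈ S, (fun k => (a k : ℤ)) = mu - Pi.single i 1 + Pi.single j 1) :
    ∃ a ∈ S, (fun k => (a k : ℤ)) = mu := by
  obtain ⟨a, ha, hA⟩ := h1
  obtain ⟨b, hb, hB⟩ := h2
  by_cases hij : i = j
  · exact ⟨a, ha, by rw [hij, add_sub_cancel_right] at hA; exact hA⟩
  have hA' : ∀ k, (a k : ℤ) = mu k + (if k = i then 1 else 0) - (if k = j then 1 else 0) := by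
    intro k
    have := congrFun hA k
    simpa [Pi.single_apply] using this
  have hB' : ∀ k, (b k : ℤ) = mu k - (if k = i then 1 else 0) + (if k = j then 1 else 0) := by
    intro k
    have := congrFun hB k
    simpa [Pi.single_apply] using this
  have hai : (a i : ℤ) = mu i + 1 := by have := hA' i; simp [hij] at this; omega
  have haj : (a j : ℤ) = mu j - 1 := by have := hA' j; simp [Ne.symm hij] at this; omega
  have hbi : (b i : ℤ) = mu i - 1 := by have := hB' i; simp [hij] at this; omega
  have hbj : (b j : ℤ) = mu j + 1 := by have := hB' j; simp [Ne.symm hij] at this; omega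
  have hlt : b i < a i := by omega
  have hne : a ≠ b := by
    intro h; rw [h] at hai; omega
  obtain ⟨j', hj', hS⟩ := hM a ha b hb hne i hlt
  have hj'j : j' = j := by
    by_contra hne'
    by_cases hji : j' = i
    · rw [hji] at hj'; omega
    · have h1 := hA' j'
      have h2 := hB' j'
      simp [hji, hne'] at h1 h2
      omega
  rw [hj'j] at hS
  refine ⟨a - Finsupp.single i 1 + Finsupp.single j 1, hS, ?_⟩
  funext k
  have hk : ((a - Finsupp.single i 1 + Finsupp.single j 1 : Fin m →₀ ℕ)) k
      = a k - (if i = k then 1 else 0) + (if j = k then 1 else 0) := by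
    rw [Finsupp.add_apply, Finsupp.tsub_apply, Finsupp.single_apply, Finsupp.single_apply]
  rw [hk]
  have hAk := hA' k
  by_cases hki : k = i
  · subst hki
    simp [hij] at hAk ⊢
    simp [Ne.symm hij]
    omega
  · by_cases hkj : k = j
    · subst hkj
      simp [Ne.symm hij, Ne.symm hki] at hAk ⊢
      omega
    · simp [hki, hkj, Ne.symm hki, Ne.symm hkj] at hAk ⊢
      omega

/-- The 0/1-coefficient polynomial of a finite M-convex set `S ⊆ ℕ^m` is ADLC;
equivalently, if `μ ∈ ℤ^m` and both `μ + e_i - e_j` and `μ - e_i + e_j` lie in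
`S`, then `μ ∈ S`. -/
theorem mconvex_indicator_ADLC (m : ℕ) (S : Finset (Fin m →₀ ℕ)) (hM : MConvex S) :
    ADLC (∑ mu ∈ S, MvPolynomial.monomial mu (1 : ℝ)) ∧
    ∀ (mu : Fin m → ℤ) (i j : Fin m),
      (∃ a ∈ S, (fun k => (a k : ℤ)) = mu + Pi.single i 1 - Pi.single j 1) →
      (∃ a ∈ S, (fun k => (a k : ℤ)) = mu - Pi.single i 1 + Pi.single j 1) →
      ∃ a ∈ S, (fun k => (a k : ℤ)) = mu := by
  set q := ∑ mu ∈ S, MvPolynomial.monomial mu (1 : ℝ) with hq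
  have hcoeff : ∀ ν : Fin m →₀ ℕ, q.coeff ν = if ν ∈ S then 1 else 0 := by
    intro ν
    rw [hq, MvPolynomial.coeff_sum]
    simp [MvPolynomial.coeff_monomial]
  have hmem : ∀ ν' : Fin m → ℤ, coeffZ q ν' ≠ 0 → ∃ a ∈ S, (fun k => (a k : ℤ)) = ν' := by
    intro ν' h
    rw [coeffZ] at h
    split_ifs at h with H
    · rw [hcoeff] at h
      split_ifs at h with hm
      · refine ⟨_, hm, ?_⟩
        funext k
        simp [Int.toNat_of_nonneg (H k)]
      · simp at h
    · simp at h
  have h01 : ∀ ν' : Fin m → ℤ, coeffZ q ν' = 0 ∨ coeffZ q ν' = 1 := by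
    intro ν'
    rw [coeffZ]
    split_ifs with H
    · rw [hcoeff]; split_ifs <;> simp
    · left; rfl
  refine ⟨?_, key_lemma S hM⟩
  intro mu i j
  set ν1 := (fun k => (mu k : ℤ)) + Pi.single i 1 - Pi.single j 1 with hν1
  set ν2 := (fun k => (mu k : ℤ)) - Pi.single i 1 + Pi.single j 1 with hν2
  by_cases h1 : coeffZ q ν1 = 0
  · rw [h1, zero_mul]; positivity
  by_cases h2 : coeffZ q ν2 = 0
  · rw [h2, mul_zero]; positivity
  obtain ⟨a, ha, hA⟩ := key_lemma S hM (fun k => (mu k : ℤ)) i j (hmem _ h1) (hmem _ h2)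
  have haeq : a = Finsupp.equivFunOnFinite.symm mu := by
    ext k
    have := congrFun hA k
    simpa using this
  have : q.coeff (Finsupp.equivFunOnFinite.symm mu) = 1 := by
    rw [hcoeff]
    simp [← haeq, ha]
  rw [this]
  rcases h01 ν1 with h | h
  · exact absurd h h1
  rcases h01 ν2 with h' | h'
  · exact absurd h' h2
  rw [h, h']; norm_num
end

section
/- Let n ≥ 1 and 1 ≤ a ≤ b ≤ n. Then the type A Kostant partition function satisfies K(α_a + α_{a+1} + ⋯ + α_b) = 2^{b−a}; that is, the number of ways to write the sum of the consecutive simple roots α_a, …, α_b as a sum of positive roots ε_i − ε_j (i < j) with nonnegative integer multiplicities equals 2^{b−a}. -/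
open Finset

/-- The type `A_n` Kostant partition function. -/
noncomputable def kostant (n : ℕ) (v : Fin (n + 1) → ℤ) : ℕ :=
  Set.ncard {m : Fin (n + 1) → Fin (n + 1) → ℕ |
    (∀ i j, ¬ i < j → m i j = 0) ∧
    ∑ i, ∑ j, (m i j : ℤ) • (eps n i - eps n j) = v}

/-- The simple roots `α_i = ε_i - ε_{i+1}` of `sl_{n+1}(ℂ)`. -/
def alphaA (n : ℕ) (i : Fin n) : Fin (n + 1) → ℤ := eps n i.castSucc - eps n i.succ

namespace KostantAux

variable {n : ℕ}

/-- The chain set: `{p, q} ∪ S`. -/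
def Tset (p q : Fin (n+1)) (S : Finset (Fin (n+1))) : Finset (Fin (n+1)) :=
  insert p (insert q S)

/-- The multiplicity function associated to a chain set. -/
def mS (p q : Fin (n+1)) (S : Finset (Fin (n+1))) : Fin (n+1) → Fin (n+1) → ℕ :=
  fun i j => if i ∈ Tset p q S ∧ j ∈ Tset p q S ∧ i < j ∧
      ∀ t ∈ Tset p q S, ¬ (i < t ∧ t < j) then 1 else 0

lemma T_subset {p q : Fin (n+1)} {S : Finset (Fin (n+1))} (hS : S ⊆ Ioo p q)
    (hpq : p < q) : Tset p q S ⊆ Icc p q := by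
  intro t ht
  rcases Finset.mem_insert.mp ht with h | h
  · subst h; exact Finset.mem_Icc.mpr ⟨le_refl _, le_of_lt hpq⟩
  rcases Finset.mem_insert.mp h with h | h
  · subst h; exact Finset.mem_Icc.mpr ⟨le_of_lt hpq, le_refl _⟩
  · exact Finset.Ioo_subset_Icc_self (hS h)

lemma p_mem_T {p q : Fin (n+1)} {S : Finset (Fin (n+1))} : p ∈ Tset p q S :=
  Finset.mem_insert_self _ _

lemma q_mem_T {p q : Fin (n+1)} {S : Finset (Fin (n+1))} : q ∈ Tset p q S :=
  Finset.mem_insert.mpr (Or.inr (Finset.mem_insert_self _ _))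

lemma outdeg {p q : Fin (n+1)} {S : Finset (Fin (n+1))} (hS : S ⊆ Ioo p q)
    (hpq : p < q) (t : Fin (n+1)) :
    ∑ j, mS p q S t j = if t ∈ Tset p q S ∧ t ≠ q then 1 else 0 := by
  by_cases ht : t ∈ Tset p q S ∧ t ≠ q
  · obtain ⟨htT, htq⟩ := ht
    have htq' : t < q := lt_of_le_of_ne (Finset.mem_Icc.mp (T_subset hS hpq htT)).2 htq
    have hne : ((Tset p q S).filter (fun x => t < x)).Nonempty :=
      ⟨q, Finset.mem_filter.mpr ⟨q_mem_T, htq'⟩⟩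
    set u := ((Tset p q S).filter (fun x => t < x)).min' hne with hu
    have huF := ((Tset p q S).filter (fun x => t < x)).min'_mem hne
    have huT : u ∈ Tset p q S := (Finset.mem_filter.mp huF).1
    have htu : t < u := (Finset.mem_filter.mp huF).2
    have hmin : ∀ x ∈ Tset p q S, t < x → u ≤ x := fun x hx hx' =>
      Finset.min'_le ((Tset p q S).filter (fun x => t < x)) x (Finset.mem_filter.mpr ⟨hx, hx'⟩)
    rw [if_pos ⟨htT, htq⟩, Finset.sum_eq_single u]
    · rw [mS, if_pos]
      exact ⟨htT, huT, htu, fun x hx ⟨h1, h2⟩ => absurd (hmin x hx h1) (not_le.mpr h2)⟩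
    · intro j _ hj
      rw [mS, if_neg]
      rintro ⟨_, hjT, htj, hbet⟩
      have := hmin j hjT htj
      exact hbet u huT ⟨htu, lt_of_le_of_ne this (Ne.symm hj)⟩
    · intro h; exact absurd (Finset.mem_univ u) h
  · rw [if_neg ht]
    refine Finset.sum_eq_zero fun j _ => ?_
    rw [mS, if_neg]
    rintro ⟨htT, hjT, htj, -⟩
    rcases not_and_or.mp ht with h | h
    · exact h htT
    · push_neg at h
      have hjq : j ≤ q := (Finset.mem_Icc.mp (T_subset hS hpq hjT)).2
      subst h
      exact absurd htj (not_lt.mpr hjq)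

lemma indeg {p q : Fin (n+1)} {S : Finset (Fin (n+1))} (hS : S ⊆ Ioo p q)
    (hpq : p < q) (t : Fin (n+1)) :
    ∑ i, mS p q S i t = if t ∈ Tset p q S ∧ t ≠ p then 1 else 0 := by
  by_cases ht : t ∈ Tset p q S ∧ t ≠ p
  · obtain ⟨htT, htp⟩ := ht
    have htp' : p < t := lt_of_le_of_ne (Finset.mem_Icc.mp (T_subset hS hpq htT)).1 (Ne.symm htp)
    have hne : ((Tset p q S).filter (fun x => x < t)).Nonempty :=
      ⟨p, Finset.mem_filter.mpr ⟨p_mem_T, htp'⟩⟩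
    set u := ((Tset p q S).filter (fun x => x < t)).max' hne with hu
    have huF := ((Tset p q S).filter (fun x => x < t)).max'_mem hne
    have huT : u ∈ Tset p q S := (Finset.mem_filter.mp huF).1
    have htu : u < t := (Finset.mem_filter.mp huF).2
    have hmax : ∀ x ∈ Tset p q S, x < t → x ≤ u := fun x hx hx' =>
      Finset.le_max' ((Tset p q S).filter (fun x => x < t)) x (Finset.mem_filter.mpr ⟨hx, hx'⟩)
    rw [if_pos ⟨htT, htp⟩, Finset.sum_eq_single u]
    · rw [mS, if_pos]
      exact ⟨huT, htT, htu, fun x hx ⟨h1, h2⟩ => absurd (hmax x hx h2) (not_le.mpr h1)⟩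
    · intro i _ hi
      rw [mS, if_neg]
      rintro ⟨hiT, _, hit, hbet⟩
      have := hmax i hiT hit
      exact hbet u huT ⟨lt_of_le_of_ne this hi, htu⟩
    · intro h; exact absurd (Finset.mem_univ u) h
  · rw [if_neg ht]
    refine Finset.sum_eq_zero fun i _ => ?_
    rw [mS, if_neg]
    rintro ⟨hiT, htT, hit, -⟩
    rcases not_and_or.mp ht with h | h
    · exact h htT
    · push_neg at h
      have hip : p ≤ i := (Finset.mem_Icc.mp (T_subset hS hpq hiT)).1
      subst h
      exact absurd hit (not_lt.mpr hip)

lemma double_apply (m : Fin (n+1) → Fin (n+1) → ℕ) (t : Fin (n+1)) :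
    (∑ i, ∑ j, (m i j : ℤ) • (eps n i - eps n j)) t
      = (∑ j, (m t j : ℤ)) - (∑ i, (m i t : ℤ)) := by
  simp only [Finset.sum_apply, Pi.smul_apply, Pi.sub_apply, smul_eq_mul, eps, Pi.single_apply,
    mul_sub, Finset.sum_sub_distrib, mul_ite, mul_one, mul_zero]
  congr 1
  · rw [Finset.sum_comm]
    simp [Finset.sum_ite_eq]
  · simp [Finset.sum_ite_eq]

lemma mS_solution {p q : Fin (n+1)} {S : Finset (Fin (n+1))} (hS : S ⊆ Ioo p q)
    (hpq : p < q) :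
    (∀ i j, ¬ i < j → mS p q S i j = 0) ∧
    ∑ i, ∑ j, (mS p q S i j : ℤ) • (eps n i - eps n j) = eps n p - eps n q := by
  constructor
  · intro i j hij
    rw [mS, if_neg]
    rintro ⟨-, -, h, -⟩
    exact hij h
  · funext t
    rw [double_apply]
    have h1 : (∑ j, (mS p q S t j : ℤ))
        = ((if t ∈ Tset p q S ∧ t ≠ q then 1 else 0 : ℕ) : ℤ) := by
      rw [← Nat.cast_sum, outdeg hS hpq t]
    have h2 : (∑ i, (mS p q S i t : ℤ))
        = ((if t ∈ Tset p q S ∧ t ≠ p then 1 else 0 : ℕ) : ℤ) := by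
      rw [← Nat.cast_sum, indeg hS hpq t]
    rw [h1, h2]
    simp only [eps, Pi.sub_apply, Pi.single_apply]
    by_cases hp : t = p
    · subst hp
      simp [p_mem_T, hpq.ne, hpq.ne']
    by_cases hq : t = q
    · subst hq
      simp [q_mem_T, hpq.ne, hpq.ne']
    · simp [hp, hq, Ne.symm hp, Ne.symm hq]

lemma recover {p q : Fin (n+1)} {S : Finset (Fin (n+1))} (hS : S ⊆ Ioo p q)
    (hpq : p < q) (k : Fin (n+1)) :
    k ∈ S ↔ k ∈ Ioo p q ∧ ∑ j, mS p q S k j = 1 := by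
  constructor
  · intro hk
    have hk' := hS hk
    refine ⟨hk', ?_⟩
    rw [outdeg hS hpq, if_pos]
    exact ⟨Finset.mem_insert.mpr (Or.inr (Finset.mem_insert.mpr (Or.inr hk))),
      ne_of_lt (Finset.mem_Ioo.mp hk').2⟩
  · rintro ⟨hk', hsum⟩
    rw [outdeg hS hpq] at hsum
    by_cases h : k ∈ Tset p q S ∧ k ≠ q
    · have hio := Finset.mem_Ioo.mp hk'
      rcases Finset.mem_insert.mp h.1 with rfl | h2
      · exact absurd hio.1 (lt_irrefl _)
      rcases Finset.mem_insert.mp h2 with rfl | h3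
      · exact absurd hio.2 (lt_irrefl _)
      · exact h3
    · rw [if_neg h] at hsum
      exact absurd hsum.symm one_ne_zero

/-- The level (crossing-number) function. -/
def lev (m : Fin (n+1) → Fin (n+1) → ℕ) (k : ℕ) : ℕ :=
  ∑ i : Fin (n+1), ∑ j : Fin (n+1), if (i:ℕ) ≤ k ∧ k < (j:ℕ) then m i j else 0

def IsSol (p q : Fin (n+1)) (m : Fin (n+1) → Fin (n+1) → ℕ) : Prop :=
  (∀ i j, ¬ i < j → m i j = 0) ∧
    ∑ i, ∑ j, (m i j : ℤ) • (eps n i - eps n j) = eps n p - eps n q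

lemma lev_eq {p q : Fin (n+1)} {m : Fin (n+1) → Fin (n+1) → ℕ}
    (hm : IsSol p q m) (hpq : p < q) (k : ℕ) :
    lev m k = if (p:ℕ) ≤ k ∧ k < (q:ℕ) then 1 else 0 := by
  obtain ⟨hm0, hm1⟩ := hm
  have h := congrArg
    (fun v : Fin (n+1) → ℤ => ∑ t ∈ Finset.univ.filter (fun t : Fin (n+1) => (t:ℕ) ≤ k), v t) hm1
  have hR : ∑ t ∈ Finset.univ.filter (fun t : Fin (n+1) => (t:ℕ) ≤ k), (eps n p - eps n q) t
      = (if (p:ℕ) ≤ k then (1:ℤ) else 0) - (if (q:ℕ) ≤ k then 1 else 0) := by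
    simp [eps, Pi.single_apply, Finset.sum_sub_distrib, Finset.sum_ite_eq]
  have hL : ∑ t ∈ Finset.univ.filter (fun t : Fin (n+1) => (t:ℕ) ≤ k),
        (∑ i, ∑ j, (m i j : ℤ) • (eps n i - eps n j)) t
      = ∑ i : Fin (n+1), ∑ j : Fin (n+1), (m i j : ℤ) *
          ((if (i:ℕ) ≤ k then 1 else 0) - (if (j:ℕ) ≤ k then 1 else 0)) := by
    simp only [Finset.sum_apply, Pi.smul_apply, Pi.sub_apply, smul_eq_mul]
    rw [Finset.sum_comm]
    refine Finset.sum_congr rfl fun i _ => ?_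
    rw [Finset.sum_comm]
    refine Finset.sum_congr rfl fun j _ => ?_
    rw [← Finset.mul_sum]
    congr 1
    simp [eps, Pi.single_apply, Finset.sum_sub_distrib, Finset.sum_ite_eq]
  rw [hL, hR] at h
  have hL2 : ∑ i : Fin (n+1), ∑ j : Fin (n+1), (m i j : ℤ) *
        ((if (i:ℕ) ≤ k then 1 else 0) - (if (j:ℕ) ≤ k then 1 else 0))
      = ((lev m k : ℕ) : ℤ) := by
    rw [lev, Nat.cast_sum]
    refine Finset.sum_congr rfl fun i _ => ?_
    rw [Nat.cast_sum]
    refine Finset.sum_congr rfl fun j _ => ?_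
    by_cases hij0 : m i j = 0
    · simp [hij0]
    · have hij : (i:ℕ) < (j:ℕ) := by
        by_contra hc
        exact hij0 (hm0 i j (by rwa [Fin.lt_def]))
      split_ifs <;> push_cast <;> first | ring1 | omega
  rw [hL2] at h
  have hpq' : (p:ℕ) < (q:ℕ) := hpq
  by_cases hc : (p:ℕ) ≤ k ∧ k < (q:ℕ)
  · rw [if_pos hc]
    have : ((lev m k : ℕ) : ℤ) = 1 := by rw [h]; rw [if_pos hc.1, if_neg (by omega)]; ring
    exact_mod_cast this
  · rw [if_neg hc]
    have : ((lev m k : ℕ) : ℤ) = 0 := by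
      rw [h]
      rcases not_and_or.mp hc with h' | h'
      · rw [if_neg h', if_neg (by omega)]; ring
      · rw [if_pos (by omega), if_pos (by omega)]; ring
    exact_mod_cast this

lemma term_le_lev {m : Fin (n+1) → Fin (n+1) → ℕ} {i j : Fin (n+1)} {k : ℕ}
    (hik : (i:ℕ) ≤ k) (hkj : k < (j:ℕ)) : m i j ≤ lev m k := by
  have h1 : m i j ≤ ∑ j' : Fin (n+1), if (i:ℕ) ≤ k ∧ k < (j':ℕ) then m i j' else 0 := by
    have := Finset.single_le_sum
      (f := fun j' : Fin (n+1) => if (i:ℕ) ≤ k ∧ k < (j':ℕ) then m i j' else 0)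
      (fun x _ => Nat.zero_le _) (Finset.mem_univ j)
    beta_reduce at this
    rwa [if_pos ⟨hik, hkj⟩] at this
  refine h1.trans ?_
  have := Finset.single_le_sum
    (f := fun i' : Fin (n+1) => ∑ j' : Fin (n+1), if (i':ℕ) ≤ k ∧ k < (j':ℕ) then m i' j' else 0)
    (fun x _ => Nat.zero_le _) (Finset.mem_univ i)
  beta_reduce at this
  exact this

lemma crossing_unique {p q : Fin (n+1)} {m : Fin (n+1) → Fin (n+1) → ℕ}
    (hm : IsSol p q m) (hpq : p < q) {k : ℕ} (hk : (p:ℕ) ≤ k ∧ k < (q:ℕ))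
    {i j i' j' : Fin (n+1)} (h1 : m i j ≠ 0) (h2 : (i:ℕ) ≤ k ∧ k < (j:ℕ))
    (h3 : m i' j' ≠ 0) (h4 : (i':ℕ) ≤ k ∧ k < (j':ℕ)) : i = i' ∧ j = j' := by
  by_contra hcon
  have hne : ((i, j) : Fin (n+1) × Fin (n+1)) ≠ (i', j') := by
    intro h
    exact hcon ⟨congrArg Prod.fst h, congrArg Prod.snd h⟩
  have hlev : lev m k = ∑ x ∈ Finset.univ ×ˢ Finset.univ,
      (if ((x : Fin (n+1) × Fin (n+1)).1 : ℕ) ≤ k ∧ k < (x.2 : ℕ) then m x.1 x.2 else 0) := by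
    rw [Finset.sum_product]
    rfl
  have hsub : ({(i, j), (i', j')} : Finset (Fin (n+1) × Fin (n+1))) ⊆ Finset.univ ×ˢ Finset.univ := by
    intro x _
    simp
  have h2 : 2 ≤ lev m k := by
    rw [hlev]
    refine le_trans ?_ (Finset.sum_le_sum_of_subset hsub)
    rw [Finset.sum_pair hne]
    simp only [if_pos h2, if_pos h4]
    omega
  have := lev_eq hm hpq k
  rw [if_pos hk] at this
  omega

lemma sol_entry {p q : Fin (n+1)} {m : Fin (n+1) → Fin (n+1) → ℕ}
    (hm : IsSol p q m) (hpq : p < q) {i j : Fin (n+1)} (hij0 : m i j ≠ 0) :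
    (i:ℕ) < (j:ℕ) ∧ m i j = 1 ∧ (p:ℕ) ≤ (i:ℕ) ∧ (i:ℕ) < (q:ℕ) ∧
      (p:ℕ) < (j:ℕ) ∧ (j:ℕ) ≤ (q:ℕ) := by
  have hij : (i:ℕ) < (j:ℕ) := by
    by_contra hc
    exact hij0 (hm.1 i j (by rwa [Fin.lt_def]))
  have h1 : m i j ≤ lev m (i:ℕ) := term_le_lev le_rfl hij
  rw [lev_eq hm hpq] at h1
  have hcond1 : (p:ℕ) ≤ (i:ℕ) ∧ (i:ℕ) < (q:ℕ) := by
    by_contra hc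
    rw [if_neg hc] at h1
    omega
  have h2 : m i j ≤ lev m ((j:ℕ) - 1) := term_le_lev (by omega) (by omega)
  rw [lev_eq hm hpq] at h2
  have hcond2 : (p:ℕ) ≤ (j:ℕ) - 1 ∧ (j:ℕ) - 1 < (q:ℕ) := by
    by_contra hc
    rw [if_neg hc] at h2
    omega
  rw [if_pos hcond1] at h1
  refine ⟨hij, by omega, hcond1.1, hcond1.2, by omega, by omega⟩

lemma sol_exists_cross {p q : Fin (n+1)} {m : Fin (n+1) → Fin (n+1) → ℕ}
    (hm : IsSol p q m) (hpq : p < q) {k : ℕ} (hk : (p:ℕ) ≤ k ∧ k < (q:ℕ)) :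
    ∃ i j, m i j ≠ 0 ∧ (i:ℕ) ≤ k ∧ k < (j:ℕ) := by
  have h1 : lev m k ≠ 0 := by
    rw [lev_eq hm hpq k, if_pos hk]
    omega
  obtain ⟨i, -, hi⟩ := Finset.exists_ne_zero_of_sum_ne_zero h1
  obtain ⟨j, -, hj⟩ := Finset.exists_ne_zero_of_sum_ne_zero hi
  by_cases hc : (i:ℕ) ≤ k ∧ k < (j:ℕ)
  · rw [if_pos hc] at hj
    exact ⟨i, j, hj, hc⟩
  · rw [if_neg hc] at hj
    exact absurd rfl hj

lemma sol_start {p q : Fin (n+1)} {m : Fin (n+1) → Fin (n+1) → ℕ}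
    (hm : IsSol p q m) (hpq : p < q) {i j : Fin (n+1)} (hij0 : m i j ≠ 0)
    (hjq : j ≠ q) : ∃ j', m j j' ≠ 0 := by
  obtain ⟨hij, -, hpi, hiq, hpj, hjq'⟩ := sol_entry hm hpq hij0
  have hjq2 : (j:ℕ) < (q:ℕ) := by
    rcases lt_or_eq_of_le hjq' with h | h
    · exact h
    · exact absurd (Fin.ext h) hjq
  obtain ⟨i', j', hij0', hcr⟩ := sol_exists_cross hm hpq (k := (j:ℕ)) ⟨by omega, hjq2⟩
  obtain ⟨hij'2, -, -, -, -, -⟩ := sol_entry hm hpq hij0'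
  by_cases hc : (i':ℕ) = (j:ℕ)
  · exact ⟨j', by rwa [show j = i' from Fin.ext hc.symm]⟩
  · exfalso
    have hlow : (p:ℕ) ≤ (j:ℕ) - 1 ∧ (j:ℕ) - 1 < (q:ℕ) := by omega
    have := crossing_unique hm hpq hlow hij0 (by omega) hij0' (by omega)
    have : (j:ℕ) = (j':ℕ) := congrArg Fin.val this.2
    omega

lemma sol_eq_mS {p q : Fin (n+1)} {m : Fin (n+1) → Fin (n+1) → ℕ}
    (hm : IsSol p q m) (hpq : p < q) :
    ∃ S ⊆ Ioo p q, m = mS p q S := by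
  classical
  set S := (Ioo p q).filter (fun x => ∃ y, m x y ≠ 0) with hSdef
  have hS : S ⊆ Ioo p q := Finset.filter_subset _ _
  refine ⟨S, hS, ?_⟩
  -- membership criteria
  have hmemS : ∀ x : Fin (n+1), x ∈ S ↔ (p < x ∧ x < q ∧ ∃ y, m x y ≠ 0) := by
    intro x
    rw [hSdef, Finset.mem_filter, Finset.mem_Ioo]
    tauto
  -- forward: nonzero entries have endpoints in T
  have hfwd : ∀ i j, m i j ≠ 0 → i ∈ Tset p q S ∧ j ∈ Tset p q S := by
    intro i j hij0
    obtain ⟨hij, -, hpi, hiq, hpj, hjq⟩ := sol_entry hm hpq hij0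
    constructor
    · by_cases hip : i = p
      · rw [hip]; exact p_mem_T
      · have hpi' : p < i := by
          rw [Fin.lt_def]
          have : (p:ℕ) ≠ (i:ℕ) := fun h => hip (Fin.ext h.symm)
          omega
        have : i ∈ S := (hmemS i).mpr ⟨hpi', hiq, ⟨j, hij0⟩⟩
        exact Finset.mem_insert.mpr (Or.inr (Finset.mem_insert.mpr (Or.inr this)))
    · by_cases hjq' : j = q
      · rw [hjq']; exact q_mem_T
      · obtain ⟨j', hj'⟩ := sol_start hm hpq hij0 hjq'
        have hjq2 : (j:ℕ) < (q:ℕ) := by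
          rcases lt_or_eq_of_le hjq with h | h
          · exact h
          · exact absurd (Fin.ext h) hjq'
        have : j ∈ S := (hmemS j).mpr ⟨hpj, hjq2, ⟨j', hj'⟩⟩
        exact Finset.mem_insert.mpr (Or.inr (Finset.mem_insert.mpr (Or.inr this)))
  -- forward: no chain point strictly inside a nonzero entry
  have hbet : ∀ i j, m i j ≠ 0 → ∀ t ∈ Tset p q S, ¬ (i < t ∧ t < j) := by
    intro i j hij0 t htT ⟨hit, htj⟩
    obtain ⟨hij, -, hpi, hiq, hpj, hjq⟩ := sol_entry hm hpq hij0
    have hit' : (i:ℕ) < (t:ℕ) := hit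
    have htj' : (t:ℕ) < (j:ℕ) := htj
    rcases Finset.mem_insert.mp htT with rfl | h2
    · omega
    rcases Finset.mem_insert.mp h2 with rfl | h3
    · omega
    · obtain ⟨hpt, htq, y, hy⟩ := (hmemS t).mp h3
      obtain ⟨hty, -, -, -, -, -⟩ := sol_entry hm hpq hy
      have hk : (p:ℕ) ≤ (t:ℕ) ∧ (t:ℕ) < (q:ℕ) := ⟨le_of_lt hpt, htq⟩
      have := crossing_unique hm hpq hk hij0 (by omega) hy (by omega)
      have : (i:ℕ) = (t:ℕ) := congrArg Fin.val this.1
      omega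
  -- backward: the chain conditions force a nonzero entry
  have hbwd : ∀ i j, i ∈ Tset p q S → j ∈ Tset p q S → i < j →
      (∀ t ∈ Tset p q S, ¬ (i < t ∧ t < j)) → m i j ≠ 0 := by
    intro i j hiT hjT hij hnb
    have hij' : (i:ℕ) < (j:ℕ) := hij
    have hiIcc := Finset.mem_Icc.mp (T_subset hS hpq hiT)
    have hjIcc := Finset.mem_Icc.mp (T_subset hS hpq hjT)
    have hpi : (p:ℕ) ≤ (i:ℕ) := hiIcc.1
    have hjq : (j:ℕ) ≤ (q:ℕ) := hjIcc.2
    have hiq : (i:ℕ) < (q:ℕ) := by omega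
    obtain ⟨i₀, j₀, h0, hcr⟩ := sol_exists_cross hm hpq (k := (i:ℕ)) ⟨hpi, hiq⟩
    -- the crossing at level i starts at i
    have hi₀ : i₀ = i := by
      by_cases hip : i = p
      · subst hip
        obtain ⟨-, -, hpi₀, -, -, -⟩ := sol_entry hm hpq h0
        exact Fin.ext (by omega)
      · have hiS : i ∈ S := by
          rcases Finset.mem_insert.mp hiT with rfl | h2
          · exact absurd rfl hip
          rcases Finset.mem_insert.mp h2 with rfl | h3
          · omega
          · exact h3
        obtain ⟨-, -, y, hy⟩ := (hmemS i).mp hiS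
        obtain ⟨hiy, -, -, -, -, -⟩ := sol_entry hm hpq hy
        have := crossing_unique hm hpq ⟨hpi, hiq⟩ h0 hcr hy (by omega)
        exact this.1
    subst hi₀
    -- the crossing at level i ends at j
    have hj₀ : j₀ = j := by
      have hj₀T := (hfwd i₀ j₀ h0).2
      have hij₀ : i₀ < j₀ := by
        rw [Fin.lt_def]; omega
      have h1 := hnb j₀ hj₀T
      have h2 := hbet i₀ j₀ h0 j hjT
      rw [Fin.lt_def, Fin.lt_def] at h1 h2
      rw [Fin.lt_def] at hij
      exact Fin.ext (by omega)
    subst hj₀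
    exact h0
  -- conclude
  funext i j
  by_cases hij : i < j
  · by_cases hij0 : m i j = 0
    · rw [hij0, mS, if_neg]
      rintro ⟨hiT, hjT, hij', hnb⟩
      exact hbwd i j hiT hjT hij' hnb hij0
    · obtain ⟨-, h1, -, -, -, -⟩ := sol_entry hm hpq hij0
      rw [h1, mS, if_pos]
      exact ⟨(hfwd i j hij0).1, (hfwd i j hij0).2, hij, hbet i j hij0⟩
  · rw [hm.1 i j hij, mS, if_neg]
    rintro ⟨-, -, h, -⟩
    exact hij h

lemma main_count (p q : Fin (n+1)) (hpq : p < q) :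
    kostant n (eps n p - eps n q) = 2 ^ ((q:ℕ) - (p:ℕ) - 1) := by
  classical
  have hset : {m : Fin (n+1) → Fin (n+1) → ℕ | (∀ i j, ¬ i < j → m i j = 0) ∧
      ∑ i, ∑ j, (m i j : ℤ) • (eps n i - eps n j) = eps n p - eps n q}
      = mS p q '' ((Ioo p q).powerset : Finset (Finset (Fin (n+1)))) := by
    ext m
    constructor
    · intro hm
      obtain ⟨S, hS, rfl⟩ := sol_eq_mS hm hpq
      exact ⟨S, Finset.mem_coe.mpr (Finset.mem_powerset.mpr hS), rfl⟩
    · rintro ⟨S, hS, rfl⟩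
      have hS' : S ⊆ Ioo p q := Finset.mem_powerset.mp (Finset.mem_coe.mp hS)
      exact mS_solution hS' hpq
  have hinj : Set.InjOn (mS p q) ((Ioo p q).powerset : Finset (Finset (Fin (n+1)))) := by
    intro S1 h1 S2 h2 h
    have h1' : S1 ⊆ Ioo p q := Finset.mem_powerset.mp (Finset.mem_coe.mp h1)
    have h2' : S2 ⊆ Ioo p q := Finset.mem_powerset.mp (Finset.mem_coe.mp h2)
    ext k
    rw [recover h1' hpq, recover h2' hpq, h]
  rw [kostant, hset, Set.ncard_image_of_injOn hinj, Set.ncard_coe_finset,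
    Finset.card_powerset, Fin.card_Ioo]

lemma tele (a : Fin n) : ∀ (d : ℕ) (b : Fin n), a ≤ b → (b:ℕ) = (a:ℕ) + d →
    ∑ i ∈ Finset.Icc a b, alphaA n i = eps n a.castSucc - eps n b.succ := by
  intro d
  induction d with
  | zero =>
    intro b hab hd
    have : a = b := Fin.ext (by omega)
    subst this
    simp [Finset.Icc_self, alphaA]
  | succ d ih =>
    intro b hab hd
    have hb1 : 1 ≤ (b:ℕ) := by omega
    have hb'lt : (b:ℕ) - 1 < n := by omega
    set b' : Fin n := ⟨(b:ℕ) - 1, hb'lt⟩ with hb'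
    have hab' : a ≤ b' := by
      rw [Fin.le_def]
      simp [hb']
      omega
    have hIcc : Finset.Icc a b = insert b (Finset.Icc a b') := by
      ext x
      simp only [Finset.mem_Icc, Finset.mem_insert, Fin.le_def, Fin.ext_iff, hb']
      omega
    have hbx : b ∉ Finset.Icc a b' := by
      simp only [Finset.mem_Icc, Fin.le_def, hb']
      omega
    rw [hIcc, Finset.sum_insert hbx, ih b' hab' (by simp [hb']; omega)]
    have hcast : b'.succ = b.castSucc := by
      rw [Fin.ext_iff]
      simp [hb']
      omega
    rw [alphaA, hcast]
    abel

end KostantAux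

/-- `K(α_a + α_{a+1} + ⋯ + α_b) = 2^{b-a}`: the number of ways to write a sum
of consecutive simple roots as a sum of positive roots `ε_i - ε_j` (`i < j`)
with nonnegative integer multiplicities. -/
theorem kostant_consecutive_simple_roots (n : ℕ) (hn : 1 ≤ n)
    (a b : Fin n) (hab : a ≤ b) :
    kostant n (∑ i ∈ Finset.Icc a b, alphaA n i) = 2 ^ ((b : ℕ) - (a : ℕ)) := by
  have hab' : (a:ℕ) ≤ (b:ℕ) := hab
  rw [KostantAux.tele a ((b:ℕ) - (a:ℕ)) b hab (by omega)]
  have hpq : a.castSucc < b.succ := by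
    simp only [Fin.lt_def, Fin.coe_castSucc, Fin.val_succ]; omega
  rw [KostantAux.main_count a.castSucc b.succ hpq]
  congr 1
  simp only [Fin.val_succ, Fin.coe_castSucc]
  omega
end

section
/- Let n ≥ 1. (i) If 1 ≤ a and a + 2 ≤ b ≤ n, then for all integers l, m ≥ 1 the type A Kostant partition function satisfies K(l·α_a + α_{a+1} + ⋯ + α_{b−1} + m·α_b) = 2^{b−a}. (ii) If 1 ≤ a and a + 1 ≤ b ≤ n, then for every integer m ≥ 1, K(α_a + α_{a+1} + ⋯ + α_{b−1} + m·α_b) = 2^{b−a}. -/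
/-!
Pairing `v = ∑ m_ij (ε_i - ε_j)` with an antitone weight `w` gives `∑ m_ij (w_i - w_j)`, a sum
of nonnegative terms. With `w_t = -t` this bounds every entry of a Kostant partition by the
height of `v`, so there are finitely many; with `w` the indicator of an initial or final segment
it shows that a partition never crosses a cut across which `v` has no net flow.

Two reductions follow. If every partition of `v` uses the root `ε_c - ε_j` at least `k` times,
then `K(v) = K(v - k(ε_c - ε_j))`: this strips `l - 1` copies of `α_a` from the vector of (i),
turning it into that of (ii), and `m - 1` copies of `α_b` from the vector of (ii), leaving
`ε_a - ε_{b+1}`. If `v` vanishes below `c`, `v_c = 1` and `v_{c+1} = 0`, then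
`K(v) = 2 K(v - α_c)`: partitions using `α_c` correspond to partitions of `v - α_c` by removing
it, and those not using it correspond to partitions of `v - α_c` by moving row `c` of the
multiplicity matrix to row `c + 1`. Hence `K(ε_c - ε_d) = 2^(d - c - 1)`.
-/

open Finset

namespace Kostant

variable {n : ℕ}

def weight (m : Fin (n + 1) → Fin (n + 1) → ℕ) : Fin (n + 1) → ℤ :=
  ∑ i, ∑ j, (m i j : ℤ) • (eps n i - eps n j)

def partitions (n : ℕ) (v : Fin (n + 1) → ℤ) : Set (Fin (n + 1) → Fin (n + 1) → ℕ) :=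
  {m | (∀ i j, ¬ i < j → m i j = 0) ∧ weight m = v}

theorem kostant_eq_ncard (v : Fin (n + 1) → ℤ) : kostant n v = (partitions n v).ncard := rfl

theorem dotProduct_weight (w : Fin (n + 1) → ℤ) (m : Fin (n + 1) → Fin (n + 1) → ℕ) :
    w ⬝ᵥ weight m = ∑ i, ∑ j, (m i j : ℤ) * (w i - w j) := by
  simp only [weight, eps, dotProduct_sum, dotProduct_smul, dotProduct_sub, dotProduct_single,
    mul_one, smul_eq_mul]

theorem weight_apply (m : Fin (n + 1) → Fin (n + 1) → ℕ) (t : Fin (n + 1)) :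
    weight m t = ∑ j, (m t j : ℤ) - ∑ i, (m i t : ℤ) := by
  rw [← one_mul (weight m t), ← single_dotProduct, dotProduct_weight]
  simp [Pi.single_apply, mul_sub, sum_sub_distrib]

theorem weight_add (m m' : Fin (n + 1) → Fin (n + 1) → ℕ) :
    weight (m + m') = weight m + weight m' := by
  simp only [weight, Pi.add_apply, Nat.cast_add, add_smul, sum_add_distrib]

theorem weight_single (c j : Fin (n + 1)) (k : ℕ) :
    weight (Pi.single c (Pi.single j k)) = (k : ℤ) • (eps n c - eps n j) := by
  rw [weight, Fintype.sum_eq_single c, Fintype.sum_eq_single j] <;> intros <;> simp [*]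

section Partitions

variable {v : Fin (n + 1) → ℤ} {m : Fin (n + 1) → Fin (n + 1) → ℕ}

theorem mul_sub_le_dotProduct (hm : m ∈ partitions n v) {w : Fin (n + 1) → ℤ}
    (hw : Antitone w) (i j : Fin (n + 1)) : (m i j : ℤ) * (w i - w j) ≤ w ⬝ᵥ v := by
  have hnonneg : ∀ i j, 0 ≤ (m i j : ℤ) * (w i - w j) := by
    intro i j
    by_cases hij : i < j
    · exact mul_nonneg (Nat.cast_nonneg _) (sub_nonneg.2 (hw hij.le))
    · simp [hm.1 i j hij]
  rw [← hm.2, dotProduct_weight]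
  calc (m i j : ℤ) * (w i - w j) ≤ ∑ j', (m i j' : ℤ) * (w i - w j') :=
        single_le_sum (fun j' _ => hnonneg i j') (mem_univ j)
    _ ≤ _ := single_le_sum (fun i' _ => sum_nonneg fun j' _ => hnonneg i' j') (mem_univ i)

theorem eq_zero_of_antitone (hm : m ∈ partitions n v) {w : Fin (n + 1) → ℤ} (hw : Antitone w)
    (hwv : w ⬝ᵥ v ≤ 0) {i j : Fin (n + 1)} (hij : w j < w i) : m i j = 0 := by
  by_contra h
  have := mul_pos (Nat.cast_pos.2 (Nat.pos_of_ne_zero h)) (sub_pos.2 hij)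
  linarith [mul_sub_le_dotProduct hm hw i j]

theorem row_eq_zero_of_lt (hm : m ∈ partitions n v) {c : Fin (n + 1)} (hv : ∀ t < c, v t = 0)
    {i : Fin (n + 1)} (hi : i < c) (j : Fin (n + 1)) : m i j = 0 := by
  by_cases hij : i < j
  · refine eq_zero_of_antitone hm (w := fun t => if t ≤ i then 1 else 0) ?_ ?_
      (by simp [hij.not_ge])
    · intro s t hst
      dsimp only
      split_ifs <;> first | order | norm_num
    · refine (sum_eq_zero fun t _ => ?_).le
      dsimp only
      split_ifs with ht
      · simp [hv t (ht.trans_lt hi)]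
      · simp
  · exact hm.1 i j hij

theorem column_eq_zero_of_gt (hm : m ∈ partitions n v) {d : Fin (n + 1)}
    (hv : ∀ t, d < t → v t = 0) (i : Fin (n + 1)) {j : Fin (n + 1)} (hj : d < j) :
    m i j = 0 := by
  by_cases hij : i < j
  · refine eq_zero_of_antitone hm (w := fun t => if j ≤ t then -1 else 0) ?_ ?_
      (by simp [hij.not_ge])
    · intro s t hst
      dsimp only
      split_ifs <;> first | order | norm_num
    · refine (sum_eq_zero fun t _ => ?_).le
      dsimp only
      split_ifs with ht
      · simp [hv t (hj.trans_le ht)]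
      · simp
  · exact hm.1 i j hij

theorem apply_le_dotProduct (hm : m ∈ partitions n v) (i j : Fin (n + 1)) :
    (m i j : ℤ) ≤ (fun t : Fin (n + 1) => -((t : ℕ) : ℤ)) ⬝ᵥ v := by
  have hw : Antitone fun t : Fin (n + 1) => -((t : ℕ) : ℤ) := fun s t hst => by
    simpa using Fin.le_def.1 hst
  have h := mul_sub_le_dotProduct hm hw i j
  by_cases hij : i < j
  · have : (1 : ℤ) ≤ -((i : ℕ) : ℤ) - -((j : ℕ) : ℤ) := by
      have := Fin.lt_def.1 hij
      omega
    nlinarith [Nat.cast_nonneg (α := ℤ) (m i j)]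
  · simpa [hm.1 i j hij] using h

theorem finite_partitions (v : Fin (n + 1) → ℤ) : (partitions n v).Finite :=
  (Set.finite_Iic fun _ _ => ((fun t : Fin (n + 1) => -((t : ℕ) : ℤ)) ⬝ᵥ v).toNat).subset
    fun _ hm i j => by exact_mod_cast (apply_le_dotProduct hm i j).trans (Int.self_le_toNat _)

theorem partitions_zero : partitions n 0 = {0} := by
  ext m
  refine ⟨fun hm => funext₂ fun i j => ?_, ?_⟩
  · simpa using apply_le_dotProduct hm i j
  · rintro rfl
    simp [partitions, weight]

theorem kostant_zero : kostant n 0 = 1 := by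
  rw [kostant_eq_ncard, partitions_zero, Set.ncard_singleton]

theorem add_single_mem_partitions_iff {c j : Fin (n + 1)} (hcj : c < j) (k : ℕ) :
    m + Pi.single c (Pi.single j k) ∈ partitions n v ↔
      m ∈ partitions n (v - (k : ℤ) • (eps n c - eps n j)) := by
  simp only [partitions, Set.mem_ofPred_eq, weight_add, weight_single, eq_sub_iff_add_eq]
  refine and_congr (forall₂_congr fun i j' => imp_congr_right fun hij => ?_) Iff.rfl
  have : (Pi.single c (Pi.single j k) : Fin (n + 1) → Fin (n + 1) → ℕ) i j' = 0 := by
    by_cases h₁ : i = c <;> by_cases h₂ : j' = j <;> simp_all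
  simp [this]

theorem image_add_single {c j : Fin (n + 1)} (hcj : c < j) (k : ℕ) :
    (· + Pi.single c (Pi.single j k)) '' partitions n (v - (k : ℤ) • (eps n c - eps n j)) =
      {m ∈ partitions n v | k ≤ m c j} := by
  ext m
  constructor
  · rintro ⟨m', hm', rfl⟩
    exact ⟨(add_single_mem_partitions_iff hcj k).2 hm', by simp⟩
  · rintro ⟨hm, hk⟩
    have hle : Pi.single c (Pi.single j k) ≤ m := fun i j' => by
      by_cases h₁ : i = c <;> by_cases h₂ : j' = j <;> simp [h₁, h₂, hk]
    refine ⟨m - Pi.single c (Pi.single j k), ?_, tsub_add_cancel_of_le hle⟩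
    rwa [← add_single_mem_partitions_iff hcj, tsub_add_cancel_of_le hle]

theorem kostant_sub_smul_of_forall_le {c j : Fin (n + 1)} (hcj : c < j) {k : ℕ}
    (h : ∀ m ∈ partitions n v, k ≤ m c j) :
    kostant n (v - (k : ℤ) • (eps n c - eps n j)) = kostant n v := by
  rw [kostant_eq_ncard, kostant_eq_ncard, ← Set.ncard_image_of_injective _ (add_left_injective _),
    image_add_single hcj, Set.sep_eq_self_iff_mem_true.2 h]

theorem sum_column_succ_eq (hm : m ∈ partitions n v) {c : Fin n}
    (hv : ∀ t < c.castSucc, v t = 0) :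
    ∑ i, (m i c.succ : ℤ) = m c.castSucc c.succ := by
  refine Fintype.sum_eq_single _ fun i hi => ?_
  rcases lt_or_gt_of_ne hi with hi | hi
  · simp [row_eq_zero_of_lt hm hv hi]
  · simp [hm.1 i c.succ (by simpa [Fin.lt_def, Fin.ext_iff] using hi)]

theorem sum_row_castSucc_eq (hm : m ∈ partitions n v) {c : Fin n}
    (hv : ∀ t, c.succ < t → v t = 0) :
    ∑ j, (m c.castSucc j : ℤ) = m c.castSucc c.succ := by
  refine Fintype.sum_eq_single _ fun j hj => ?_
  rcases lt_or_gt_of_ne hj with hj | hj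
  · simp [hm.1 c.castSucc j (by simpa [Fin.lt_def, Fin.ext_iff] using hj)]
  · simp [column_eq_zero_of_gt hm hv c.castSucc (by simpa [Fin.lt_def, Fin.ext_iff] using hj)]

theorem neg_apply_succ_le (hm : m ∈ partitions n v) {c : Fin n}
    (hv : ∀ t < c.castSucc, v t = 0) :
    -v c.succ ≤ m c.castSucc c.succ := by
  have hout : 0 ≤ ∑ j, (m c.succ j : ℤ) := sum_nonneg fun _ _ => Nat.cast_nonneg _
  rw [← hm.2, weight_apply, sum_column_succ_eq hm hv]
  linarith

theorem apply_castSucc_le (hm : m ∈ partitions n v) {c : Fin n}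
    (hv : ∀ t, c.succ < t → v t = 0) :
    v c.castSucc ≤ m c.castSucc c.succ := by
  have hin : 0 ≤ ∑ i, (m i c.castSucc : ℤ) := sum_nonneg fun _ _ => Nat.cast_nonneg _
  rw [← hm.2, weight_apply, sum_row_castSucc_eq hm hv]
  linarith

theorem sum_row_eq_apply (hm : m ∈ partitions n v) {c : Fin (n + 1)} (hv : ∀ t < c, v t = 0) :
    ∑ j, (m c j : ℤ) = v c := by
  have hin : ∑ i, (m i c : ℤ) = 0 := sum_eq_zero fun i _ => by
    by_cases hic : i < c
    · simp [row_eq_zero_of_lt hm hv hic]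
    · simp [hm.1 i c hic]
  rw [← hm.2, weight_apply, hin, sub_zero]

theorem weight_comp_swap {r : Fin (n + 1)} (hr : ∀ j, m r j = 0) (s : Fin (n + 1)) :
    weight (fun i => m (Equiv.swap r s i)) =
      weight m + (∑ j, (m s j : ℤ)) • (eps n r - eps n s) := by
  have hreindex : weight (fun i => m (Equiv.swap r s i)) =
      ∑ i, ∑ j, (m i j : ℤ) • (eps n (Equiv.swap r s i) - eps n j) := by
    rw [weight, ← Equiv.sum_comp (Equiv.swap r s)]
    simp only [Equiv.swap_apply_self]
  have hshift : ∀ i, ∑ j, (m i j : ℤ) • (eps n (Equiv.swap r s i) - eps n j) =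
      ∑ j, (m i j : ℤ) • (eps n i - eps n j) +
        (∑ j, (m i j : ℤ)) • (eps n (Equiv.swap r s i) - eps n i) := fun i => by
    rw [sum_smul, ← sum_add_distrib]
    exact sum_congr rfl fun j _ => by module
  rw [hreindex, sum_congr rfl fun i _ => hshift i, sum_add_distrib, ← weight,
    Fintype.sum_eq_single s, Equiv.swap_apply_right]
  intro i his
  by_cases hir : i = r
  · simp [hir, hr]
  · simp [Equiv.swap_apply_of_ne_of_ne hir his]

theorem comp_swap_mem_partitions (hm : m ∈ partitions n v) {r s : Fin (n + 1)}
    (hr : ∀ j, m r j = 0) (hs : ∀ j, m s j ≠ 0 → r < j) :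
    (fun i => m (Equiv.swap r s i)) ∈
      partitions n (v + (∑ j, (m s j : ℤ)) • (eps n r - eps n s)) := by
  refine ⟨fun i j hij => ?_, by rw [weight_comp_swap hr, hm.2]⟩
  change m (Equiv.swap r s i) j = 0
  rcases eq_or_ne i r with rfl | hir
  · rw [Equiv.swap_apply_left]
    by_contra h
    exact hij (hs j h)
  rcases eq_or_ne i s with rfl | his
  · rw [Equiv.swap_apply_right]
    exact hr j
  · rw [Equiv.swap_apply_of_ne_of_ne hir his]
    exact hm.1 i j hij

theorem image_comp_swap {c : Fin n} (hv : ∀ t < c.castSucc, v t = 0) (hc : v c.castSucc = 1)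
    (hc' : v c.succ = 0) :
    (fun m i => m (Equiv.swap c.castSucc c.succ i)) '' partitions n (v - alphaA n c) =
      {m ∈ partitions n v | m c.castSucc c.succ = 0} := by
  have hlt : c.castSucc < c.succ := Fin.castSucc_lt_succ
  ext m
  constructor
  · rintro ⟨m', hm', rfl⟩
    have hv' : ∀ t < c.succ, (v - alphaA n c) t = 0 := by
      intro t ht
      rcases (Fin.le_castSucc_iff.2 ht).lt_or_eq with ht | rfl
      · simp [alphaA, eps, hv t ht, ht.ne, (ht.trans hlt).ne]
      · simp [alphaA, eps, hc, hlt.ne]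
    have hout : ∑ j, (m' c.succ j : ℤ) = 1 := by
      rw [sum_row_eq_apply hm' hv']
      simp [alphaA, eps, hc', hlt.ne']
    have h := comp_swap_mem_partitions hm' (row_eq_zero_of_lt hm' hv' hlt) fun j hj =>
      hlt.trans (not_not.1 (mt (hm'.1 c.succ j) hj))
    rw [hout, one_smul, ← alphaA, sub_add_cancel] at h
    exact ⟨h, by simp [hm'.1 c.succ c.succ (lt_irrefl _)]⟩
  · rintro ⟨hm, hzero⟩
    have hrow : ∀ j, m c.succ j = 0 := by
      have h := weight_apply m c.succ
      rw [hm.2, hc', sum_column_succ_eq hm hv, hzero, Nat.cast_zero, sub_zero] at h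
      intro j
      exact_mod_cast
        (sum_eq_zero_iff_of_nonneg fun _ _ => Nat.cast_nonneg _).1 h.symm j (mem_univ _)
    have hsucc : ∀ j, m c.castSucc j ≠ 0 → c.succ < j := fun j hj =>
      (Fin.castSucc_lt_iff_succ_le.1 (not_not.1 (mt (hm.1 _ j) hj))).lt_of_ne
        fun h => hj (h ▸ hzero)
    have h := comp_swap_mem_partitions hm hrow hsucc
    rw [sum_row_eq_apply hm hv, hc, one_smul, Equiv.swap_comm, ← neg_sub, ← alphaA,
      ← sub_eq_add_neg] at h
    exact ⟨_, h, funext fun i => by simp⟩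

theorem kostant_eq_two_mul {c : Fin n} (hv : ∀ t < c.castSucc, v t = 0) (hc : v c.castSucc = 1)
    (hc' : v c.succ = 0) : kostant n v = 2 * kostant n (v - alphaA n c) := by
  have hswap : Function.Injective fun (m : Fin (n + 1) → Fin (n + 1) → ℕ) i =>
      m (Equiv.swap c.castSucc c.succ i) := fun m₁ m₂ h => funext fun i => by
    simpa using congrFun h (Equiv.swap c.castSucc c.succ i)
  have hzero : ({m ∈ partitions n v | m c.castSucc c.succ = 0}).ncard =
      kostant n (v - alphaA n c) := by
    rw [← image_comp_swap hv hc hc', Set.ncard_image_of_injective _ hswap, kostant_eq_ncard]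
  have hpos : ({m ∈ partitions n v | 1 ≤ m c.castSucc c.succ}).ncard =
      kostant n (v - alphaA n c) := by
    rw [← image_add_single (Fin.castSucc_lt_succ),
      Set.ncard_image_of_injective _ (add_left_injective _), Nat.cast_one, one_smul, ← alphaA,
      kostant_eq_ncard]
  rw [kostant_eq_ncard, ← Set.ncard_inter_add_ncard_sdiff_eq_ncard _
    {m | m c.castSucc c.succ = 0} (finite_partitions v)]
  have hdiff : partitions n v \ {m | m c.castSucc c.succ = 0} =
      {m ∈ partitions n v | 1 ≤ m c.castSucc c.succ} := by
    ext m
    simp [Nat.one_le_iff_ne_zero]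
  rw [hdiff, hpos, ← hzero, two_mul]
  rfl

end Partitions

theorem kostant_alphaA (c : Fin n) : kostant n (alphaA n c) = 1 := by
  have h := kostant_sub_smul_of_forall_le (v := alphaA n c) (k := 1) Fin.castSucc_lt_succ
    fun m hm => by
      have := neg_apply_succ_le hm (c := c) fun t ht => by
        simp [alphaA, eps, ht.ne, (ht.trans Fin.castSucc_lt_succ).ne]
      simp [alphaA, eps, Fin.castSucc_lt_succ.ne'] at this
      exact_mod_cast this
  rwa [Nat.cast_one, one_smul, ← alphaA, sub_self, kostant_zero, eq_comm] at h

theorem kostant_eps_sub_eps (k : ℕ) :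
    ∀ c d : Fin (n + 1), (d : ℕ) = c + k + 1 → kostant n (eps n c - eps n d) = 2 ^ k := by
  induction k with
  | zero =>
    intro c d hd
    obtain ⟨c, rfl⟩ : ∃ c' : Fin n, c'.castSucc = c := ⟨⟨c, by omega⟩, rfl⟩
    obtain rfl : d = c.succ := Fin.ext (by simpa using hd)
    exact kostant_alphaA c
  | succ k ih =>
    intro c d hd
    obtain ⟨c, rfl⟩ : ∃ c' : Fin n, c'.castSucc = c := ⟨⟨c, by omega⟩, rfl⟩
    simp only [Fin.val_castSucc] at hd
    have hcd : c.castSucc < d := Fin.lt_def.2 (by simp; omega)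
    have hsd : c.succ ≠ d := Fin.ne_of_val_ne (by simp; omega)
    have hsub : eps n c.castSucc - eps n d - alphaA n c = eps n c.succ - eps n d := by
      rw [alphaA]
      abel
    rw [kostant_eq_two_mul (c := c) (fun t ht => ?_) (by simp [eps, hcd.ne])
      (by simp [eps, Fin.castSucc_lt_succ.ne', hsd]), hsub, ih c.succ d (by simp; omega), pow_succ,
      mul_comm]
    simp [eps, ht.ne, (ht.trans hcd).ne]

theorem sum_Ico_alphaA {a b : Fin n} (hab : a ≤ b) :
    ∑ j ∈ Ico a b, alphaA n j = eps n a.castSucc - eps n b.castSucc := by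
  set F : ℕ → Fin (n + 1) → ℤ := fun k => if h : k < n + 1 then eps n ⟨k, h⟩ else 0
  have hF : ∀ j : Fin n, F j = eps n j.castSucc := fun j => dif_pos (Nat.lt_succ_of_lt j.isLt)
  have hF' : ∀ j : Fin n, F (j + 1) = eps n j.succ := fun j => dif_pos (Nat.succ_lt_succ j.isLt)
  have hα : ∀ j : Fin n, alphaA n j = F j - F (j + 1) := fun j => by rw [hF, hF', alphaA]
  have hmap := sum_map (Ico a b) Fin.valEmbedding fun k => F k - F (k + 1)
  simp only [Fin.map_valEmbedding_Ico, Fin.valEmbedding_apply] at hmap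
  rw [sum_congr rfl fun j _ => hα j, ← hmap, ← hF, ← hF, ← neg_sub,
    ← sum_Ico_sub (f := F) (Fin.le_def.1 hab), ← sum_neg_distrib]
  simp_rw [neg_sub]

theorem kostant_sum_Ico_alphaA_add_smul {a b : Fin n} (hab : a < b) {m : ℕ} (hm : 1 ≤ m) :
    kostant n ((∑ j ∈ Ico a b, alphaA n j) + (m : ℤ) • alphaA n b) =
      2 ^ ((b : ℕ) - a) := by
  have hab' := Fin.lt_def.1 hab
  rw [sum_Ico_alphaA hab.le]
  have hle : ∀ x ∈ partitions n
      (eps n a.castSucc - eps n b.castSucc + (m : ℤ) • alphaA n b),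
      m - 1 ≤ x b.castSucc b.succ := fun x hx => by
    have h := apply_castSucc_le hx (c := b) fun t ht => by
      simp only [Fin.lt_def, Fin.val_succ] at ht
      simp [alphaA, eps, Pi.single_apply, Fin.ext_iff]
      split_ifs <;> omega
    simp [alphaA, eps, Pi.single_apply, Fin.ext_iff] at h
    split_ifs at h <;> omega
  have hsub : eps n a.castSucc - eps n b.castSucc + (m : ℤ) • alphaA n b -
      ((m - 1 : ℕ) : ℤ) • (eps n b.castSucc - eps n b.succ) =
        eps n a.castSucc - eps n b.succ := by
    rw [Nat.cast_sub hm, alphaA]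
    module
  rw [← kostant_sub_smul_of_forall_le Fin.castSucc_lt_succ hle, hsub,
    kostant_eps_sub_eps ((b : ℕ) - a) _ _ (by simp; omega)]

theorem kostant_smul_add_sum_Ioo_alphaA_add_smul {a b : Fin n} (hab : (a : ℕ) + 2 ≤ b)
    {l m : ℕ} (hl : 1 ≤ l) (hm : 1 ≤ m) :
    kostant n
        ((l : ℤ) • alphaA n a + (∑ j ∈ Ioo a b, alphaA n j) + (m : ℤ) • alphaA n b) =
      2 ^ ((b : ℕ) - a) := by
  have hab' : a < b := Fin.lt_def.2 (by omega)
  have hIoo : ∑ j ∈ Ioo a b, alphaA n j = eps n a.succ - eps n b.castSucc := by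
    have h := sum_Ioo_add_eq_sum_Ico (f := alphaA n) hab'
    rw [sum_Ico_alphaA hab'.le, alphaA] at h
    rw [eq_sub_of_add_eq h]
    abel
  rw [hIoo]
  have hle : ∀ x ∈ partitions n ((l : ℤ) • alphaA n a + (eps n a.succ - eps n b.castSucc) +
      (m : ℤ) • alphaA n b), l - 1 ≤ x a.castSucc a.succ := fun x hx => by
    have h := neg_apply_succ_le hx (c := a) fun t ht => by
      simp only [Fin.lt_def, Fin.val_castSucc] at ht
      simp [alphaA, eps, Pi.single_apply, Fin.ext_iff]
      split_ifs <;> omega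
    simp [alphaA, eps, Pi.single_apply, Fin.ext_iff] at h
    split_ifs at h <;> omega
  have hsub :
      (l : ℤ) • alphaA n a + (eps n a.succ - eps n b.castSucc) + (m : ℤ) • alphaA n b -
      ((l - 1 : ℕ) : ℤ) • (eps n a.castSucc - eps n a.succ) =
        (∑ j ∈ Ico a b, alphaA n j) + (m : ℤ) • alphaA n b := by
    rw [sum_Ico_alphaA hab'.le, Nat.cast_sub hl, alphaA]
    module
  rw [← kostant_sub_smul_of_forall_le Fin.castSucc_lt_succ hle, hsub,
    kostant_sum_Ico_alphaA_add_smul hab' hm]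

end Kostant

theorem kostant_weighted_consecutive_simple_roots_general (n : ℕ) :
    (∀ a b : Fin n, (a : ℕ) + 2 ≤ (b : ℕ) → ∀ l m : ℕ, 1 ≤ l → 1 ≤ m →
      kostant n ((l : ℤ) • alphaA n a + (∑ j ∈ Finset.Ioo a b, alphaA n j)
          + (m : ℤ) • alphaA n b)
        = 2 ^ ((b : ℕ) - (a : ℕ))) ∧
    (∀ a b : Fin n, (a : ℕ) + 1 ≤ (b : ℕ) → ∀ m : ℕ, 1 ≤ m →
      kostant n ((∑ j ∈ Finset.Ico a b, alphaA n j) + (m : ℤ) • alphaA n b)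
        = 2 ^ ((b : ℕ) - (a : ℕ))) :=
  ⟨fun _ _ hab _ _ hl hm => Kostant.kostant_smul_add_sum_Ioo_alphaA_add_smul hab hl hm,
    fun _ _ hab _ hm => Kostant.kostant_sum_Ico_alphaA_add_smul hab hm⟩

/-- (i) For `a + 2 ≤ b` and `l, m ≥ 1`:
`K(l·α_a + α_{a+1} + ⋯ + α_{b-1} + m·α_b) = 2^{b-a}`.
(ii) For `a + 1 ≤ b` and `m ≥ 1`:
`K(α_a + α_{a+1} + ⋯ + α_{b-1} + m·α_b) = 2^{b-a}`. -/
theorem kostant_weighted_consecutive_simple_roots (n : ℕ) (hn : 1 ≤ n) :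
    (∀ a b : Fin n, (a : ℕ) + 2 ≤ (b : ℕ) → ∀ l m : ℕ, 1 ≤ l → 1 ≤ m →
      kostant n ((l : ℤ) • alphaA n a + (∑ j ∈ Finset.Ioo a b, alphaA n j)
          + (m : ℤ) • alphaA n b)
        = 2 ^ ((b : ℕ) - (a : ℕ))) ∧
    (∀ a b : Fin n, (a : ℕ) + 1 ≤ (b : ℕ) → ∀ m : ℕ, 1 ≤ m →
      kostant n ((∑ j ∈ Finset.Ico a b, alphaA n j) + (m : ℤ) • alphaA n b)
        = 2 ^ ((b : ℕ) - (a : ℕ))) :=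
  kostant_weighted_consecutive_simple_roots_general n
end

section
/- Let a ≥ 3 be an integer and τ > 0 a real number, and for 0 ≤ i ≤ a set c_i = (τ)_i · (τ)_{a−i} / (i! · (a−i)!), where (τ)_k = τ(τ+1)⋯(τ+k−1) and (τ)_0 = 1 (these are, up to a common positive factor, the coefficients of the two-variable Jack polynomial P_{(a,0)}^{(τ)}(x,y)). Then c_1² ≥ c_0·c_2 if and only if τ ≥ 1. -/
open Finset

/-- For `a ≥ 3` and `τ > 0`, the coefficients
`c_i = (τ)_i (τ)_{a-i} / (i! (a-i)!)` of the two-variable Jack polynomial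
`P_{(a,0)}^{(τ)}` (up to a common positive factor) satisfy `c_1² ≥ c_0 c_2`
if and only if `τ ≥ 1`. -/
theorem jack_log_concave_iff (a : ℕ) (ha : 3 ≤ a) (τ : ℝ) (hτ : 0 < τ) :
    let poch : ℕ → ℝ := fun k => ∏ i ∈ Finset.range k, (τ + (i : ℝ))
    let c : ℕ → ℝ := fun i =>
      poch i * poch (a - i) / ((Nat.factorial i : ℝ) * (Nat.factorial (a - i) : ℝ))
    (c 0 * c 2 ≤ c 1 ^ 2 ↔ 1 ≤ τ) := by
  intro poch c
  obtain ⟨n, rfl⟩ : ∃ n, a = n + 3 := ⟨a - 3, by omega⟩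
  have hpoch : ∀ k, poch k = ∏ i ∈ Finset.range k, (τ + (i : ℝ)) := fun _ => rfl
  have hc : ∀ i, c i = poch i * poch (n + 3 - i) /
      ((Nat.factorial i : ℝ) * (Nat.factorial (n + 3 - i) : ℝ)) := fun _ => rfl
  have hP : 0 < poch (n + 1) := by
    rw [hpoch]
    exact Finset.prod_pos fun i _ => by positivity
  have hF : (0 : ℝ) < (Nat.factorial (n + 1) : ℝ) := by positivity
  set P := poch (n + 1) with hPdef
  set F := (Nat.factorial (n + 1) : ℝ) with hFdef
  have hp0 : poch 0 = 1 := by simp [hpoch]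
  have hp1 : poch 1 = τ := by simp [hpoch]
  have hp2 : poch 2 = τ * (τ + 1) := by
    rw [hpoch, Finset.prod_range_succ, Finset.prod_range_one]
    norm_num
  have hp2' : poch (n + 2) = P * (τ + (n + 1 : ℕ)) := by
    rw [hpoch, Finset.prod_range_succ, hPdef, hpoch]
  have hp3 : poch (n + 3) = P * (τ + (n + 1 : ℕ)) * (τ + (n + 2 : ℕ)) := by
    rw [hpoch, Finset.prod_range_succ, show n + 3 = (n + 2) + 1 from rfl] at *
    rw [Finset.prod_range_succ, ← hpoch, hp2']
  have hf2 : (Nat.factorial (n + 2) : ℝ) = (n + 2 : ℕ) * F := by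
    rw [hFdef, Nat.factorial_succ]; push_cast; ring
  have hf3 : (Nat.factorial (n + 3) : ℝ) = (n + 3 : ℕ) * ((n + 2 : ℕ) * F) := by
    rw [show n + 3 = (n + 2) + 1 from rfl, Nat.factorial_succ, Nat.cast_mul, hf2]
  have hc0 : c 0 = P * (τ + (n + 1 : ℕ)) * (τ + (n + 2 : ℕ)) /
      (((n + 3 : ℕ) : ℝ) * (((n + 2 : ℕ) : ℝ) * F)) := by
    rw [hc 0]
    simp only [Nat.sub_zero, Nat.factorial_zero]
    rw [hp0, hp3, hf3]
    push_cast
    ring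
  have hc1 : c 1 = τ * (P * (τ + (n + 1 : ℕ))) / (((n + 2 : ℕ) : ℝ) * F) := by
    rw [hc 1]
    simp only [Nat.factorial_one, show n + 3 - 1 = n + 2 from rfl]
    rw [hp1, hp2', hf2]
    push_cast
    ring
  have hc2 : c 2 = τ * (τ + 1) * P / (2 * F) := by
    rw [hc 2]
    simp only [show n + 3 - 2 = n + 1 from rfl, show Nat.factorial 2 = 2 from rfl]
    rw [hp2, ← hPdef, ← hFdef]
    push_cast
    ring
  -- key algebraic identity
  have hn2 : ((n : ℝ) + 2) ≠ 0 := by positivity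
  have hn3 : ((n : ℝ) + 3) ≠ 0 := by positivity
  have hFne : F ≠ 0 := ne_of_gt hF
  have hA : (0 : ℝ) < τ * P ^ 2 * (τ + ((n : ℝ) + 1)) /
      (2 * ((n : ℝ) + 3) * ((n : ℝ) + 2) ^ 2 * F ^ 2) := by positivity
  set A := τ * P ^ 2 * (τ + ((n : ℝ) + 1)) /
      (2 * ((n : ℝ) + 3) * ((n : ℝ) + 2) ^ 2 * F ^ 2) with hAdef
  have hB : (0 : ℝ) < ((n : ℝ) + 4) * τ + ((n : ℝ) + 2) ^ 2 := by positivity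
  set B := ((n : ℝ) + 4) * τ + ((n : ℝ) + 2) ^ 2 with hBdef
  have key : c 1 ^ 2 - c 0 * c 2 = A * ((τ - 1) * B) := by
    rw [hc0, hc1, hc2, hAdef, hBdef]
    push_cast
    field_simp
    ring
  constructor
  · intro h
    have h0 : 0 ≤ A * ((τ - 1) * B) := by linarith [key]
    nlinarith [mul_pos hA hB]
  · intro h
    have h0 : 0 ≤ A * ((τ - 1) * B) :=
      mul_nonneg hA.le (mul_nonneg (by linarith) hB.le)
    linarith [key]
end

section
/- Let τ be a real number with 0 ≤ τ < 1 and define f_τ : ℝ² → ℝ by f_τ(x,y) = (x² + y² + (2τ/(τ+1))·xy)² − (x³ + y³ + (3τ/(τ+2))·xy(x+y))·(x+y); this is the Jack polynomial difference P_{(2,0)}^{(τ)}(x,y)² − P_{(3,0)}^{(τ)}(x,y)·P_{(1,0)}^{(τ)}(x,y). Then for all real x, y: f_τ(x,y) = (2(τ−1)/((τ+1)(τ+2)))·xy(x²+y²) + (4(τ²+τ+1)/((τ+1)²(τ+2)))·x²y², and there exist x > 0 and y > 0 with f_τ(x,y) < 0. -/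
/-- For `0 ≤ τ < 1`, the Jack polynomial difference
`f_τ(x,y) = P_{(2,0)}^{(τ)}(x,y)² - P_{(3,0)}^{(τ)}(x,y)·P_{(1,0)}^{(τ)}(x,y)`
equals `(2(τ-1)/((τ+1)(τ+2)))·xy(x²+y²) + (4(τ²+τ+1)/((τ+1)²(τ+2)))·x²y²`,
and it is negative at some point of the open positive quadrant. -/
theorem jack_okounkov_fails (τ : ℝ) (h0 : 0 ≤ τ) (h1 : τ < 1) :
    (∀ x y : ℝ,
      (x ^ 2 + y ^ 2 + (2 * τ / (τ + 1)) * x * y) ^ 2 -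
          (x ^ 3 + y ^ 3 + (3 * τ / (τ + 2)) * x * y * (x + y)) * (x + y)
        = (2 * (τ - 1) / ((τ + 1) * (τ + 2))) * x * y * (x ^ 2 + y ^ 2) +
            (4 * (τ ^ 2 + τ + 1) / ((τ + 1) ^ 2 * (τ + 2))) * x ^ 2 * y ^ 2) ∧
    ∃ x y : ℝ, 0 < x ∧ 0 < y ∧
      (x ^ 2 + y ^ 2 + (2 * τ / (τ + 1)) * x * y) ^ 2 -
          (x ^ 3 + y ^ 3 + (3 * τ / (τ + 2)) * x * y * (x + y)) * (x + y) < 0 := by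
  have hp1 : (0:ℝ) < τ + 1 := by linarith
  have hp2 : (0:ℝ) < τ + 2 := by linarith
  have hn1 : (τ + 1) ≠ 0 := ne_of_gt hp1
  have hn2 : (τ + 2) ≠ 0 := ne_of_gt hp2
  constructor
  · intro x y
    field_simp
    ring
  · set y : ℝ := (1 - τ) / 36 with hy
    have hy0 : 0 < y := by rw [hy]; apply div_pos <;> linarith
    refine ⟨1, y, one_pos, hy0, ?_⟩
    have hrw :
        ((1:ℝ) ^ 2 + y ^ 2 + (2 * τ / (τ + 1)) * 1 * y) ^ 2 -
          ((1:ℝ) ^ 3 + y ^ 3 + (3 * τ / (τ + 2)) * 1 * y * (1 + y)) * (1 + y)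
        = (2 * (τ - 1) * (τ + 1) * y * (1 + y ^ 2) + 4 * (τ ^ 2 + τ + 1) * y ^ 2) /
            ((τ + 1) ^ 2 * (τ + 2)) := by
      field_simp
      ring
    rw [hrw]
    apply div_neg_of_neg_of_pos
    · have h1y : (0:ℝ) ≤ (1 - τ) * (τ + 1) * y ^ 2 :=
        mul_nonneg (mul_nonneg (by linarith) hp1.le) (sq_nonneg y)
      have hA : 2 * (τ - 1) * (τ + 1) * (1 + y ^ 2) ≤ 2 * (τ - 1) * (τ + 1) := by nlinarith
      have hB : 4 * (τ ^ 2 + τ + 1) * y ≤ 12 * y := by nlinarith [mul_pos hy0 hy0]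
      have hC : 2 * (τ - 1) * (τ + 1) + 12 * y < 0 := by
        rw [hy]; nlinarith [mul_nonneg h0 h0]
      have hnum : 2 * (τ - 1) * (τ + 1) * (1 + y ^ 2) + 4 * (τ ^ 2 + τ + 1) * y < 0 := by
        linarith
      nlinarith [mul_pos hy0 hy0]
    · positivity
end

section
/- For all real numbers t, x, y: (x² + (1−t)xy + y²)² − (x³ + y³ + (1−t)·xy(x+y))·(x+y) = −xy·(tx−y)·(x−ty). Consequently, for every t ∈ (0,1) and all x, y with 0 < y < t·x, the Hall–Littlewood difference P_{(2,0)}(x,y;t)² − P_{(3,0)}(x,y;t)·P_{(1,0)}(x,y;t) is strictly negative. -/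
/-- The Hall–Littlewood identity
`P_{(2,0)}(x,y;t)² - P_{(3,0)}(x,y;t)·P_{(1,0)}(x,y;t) = -xy(tx-y)(x-ty)`;
consequently for `t ∈ (0,1)` and `0 < y < tx` this difference is strictly
negative. -/
theorem hall_littlewood_okounkov_fails :
    (∀ t x y : ℝ,
      (x ^ 2 + (1 - t) * x * y + y ^ 2) ^ 2 -
          (x ^ 3 + y ^ 3 + (1 - t) * x * y * (x + y)) * (x + y)
        = -(x * y * (t * x - y) * (x - t * y))) ∧
    ∀ t : ℝ, t ∈ Set.Ioo (0 : ℝ) 1 → ∀ x y : ℝ, 0 < y → y < t * x →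
      (x ^ 2 + (1 - t) * x * y + y ^ 2) ^ 2 -
          (x ^ 3 + y ^ 3 + (1 - t) * x * y * (x + y)) * (x + y) < 0 := by
  constructor
  · intro t x y; ring
  · rintro t ⟨ht0, ht1⟩ x y hy hytx
    have hx : 0 < x := by nlinarith
    have h1 : 0 < t * x - y := by linarith
    have h2 : 0 < x - t * y := by nlinarith
    nlinarith [mul_pos (mul_pos (mul_pos hx hy) h1) h2]
end

section
/- Let G be a graph on vertex set {1,…,n+1} with edge set E such that every vertex i ∈ {1,…,n} has at least one outgoing edge, and let a_1,…,a_n ≥ 0 be real numbers. Then the flow polytope decomposes as a weighted Minkowski sum: F_G(a_1,…,a_n) = a_1·F_G(e_1) + a_2·F_G(e_2) + ⋯ + a_n·F_G(e_n), where e_i ∈ ℝ^n denotes the i-th standard basis vector, the sum on the right is the Minkowski sum of subsets of ℝ^E, and r·X = {r·f : f ∈ X} for a scalar r ≥ 0 and X ⊆ ℝ^E. -/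
open Finset Pointwise

/-- The flow polytope `F_G(a) ⊆ ℝ^E` of a graph `G` on `{1,…,n+1}` with edge
set `E`, sources `s`, targets `t`: the set of nonnegative functions
`f : E → ℝ` satisfying flow conservation
`∑_{e : t(e)=i} f(e) + a_i = ∑_{e : s(e)=i} f(e)` at each `i ∈ {1,…,n}`. -/
def flowPolytope (n : ℕ) (E : Type) [Fintype E] (s t : E → Fin (n + 1))
    (a : Fin n → ℝ) : Set (E → ℝ) :=
  {f | (∀ e, 0 ≤ f e) ∧ ∀ i : Fin n,
    (∑ e ∈ Finset.univ.filter (fun e => t e = i.castSucc), f e) + a i =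
      ∑ e ∈ Finset.univ.filter (fun e => s e = i.castSucc), f e}

variable {n : ℕ} {E : Type} [Fintype E]

noncomputable def outF (s : E → Fin (n+1)) (f : E → ℝ) (v : Fin (n+1)) : ℝ :=
  ∑ e ∈ Finset.univ.filter (fun e => s e = v), f e

noncomputable def pf (s t : E → Fin (n+1)) (hst : ∀ e, s e < t e) (f : E → ℝ)
    (i : Fin n) (m : ℕ) : ℝ :=
  (if m = (i : ℕ) then 1 else 0) +
  ∑ e ∈ (Finset.univ.filter (fun e => (t e : ℕ) = m)).attach,
    pf s t hst f i (s e.1 : ℕ) * (f e.1 / outF s f (s e.1))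
termination_by m
decreasing_by
  have h1 := (Finset.mem_filter.mp e.2).2
  have h2 := hst e.1
  rw [Fin.lt_def] at h2
  omega

lemma outF_nonneg (s : E → Fin (n+1)) (f : E → ℝ) (hf : ∀ e, 0 ≤ f e) (v : Fin (n+1)) :
    0 ≤ outF s f v :=
  Finset.sum_nonneg fun e _ => hf e

lemma le_outF (s : E → Fin (n+1)) (f : E → ℝ) (hf : ∀ e, 0 ≤ f e) (e : E) :
    f e ≤ outF s f (s e) :=
  Finset.single_le_sum (fun e' _ => hf e') (by simp)

lemma outF_zero (s : E → Fin (n+1)) (f : E → ℝ) (hf : ∀ e, 0 ≤ f e) (v : Fin (n+1))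
    (h : outF s f v = 0) (e : E) (he : s e = v) : f e = 0 := by
  have := le_outF s f hf e
  rw [he, h] at this
  exact le_antisymm this (hf e)

lemma pf_nonneg (s t : E → Fin (n+1)) (hst : ∀ e, s e < t e) (f : E → ℝ)
    (hf : ∀ e, 0 ≤ f e) (i : Fin n) (m : ℕ) : 0 ≤ pf s t hst f i m := by
  induction m using Nat.strong_induction_on with
  | _ m ih =>
    rw [pf]
    apply add_nonneg
    · positivity
    · apply Finset.sum_nonneg
      intro e _
      have h1 := (Finset.mem_filter.mp e.2).2
      have h2 := hst e.1
      rw [Fin.lt_def] at h2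
      exact mul_nonneg (ih _ (by omega)) (div_nonneg (hf _) (outF_nonneg s f hf _))

/-- Key identity: `∑ i, a i * pf i m = outF ⟨m⟩` for `m < n`, given conservation. -/
lemma pf_sum (s t : E → Fin (n+1)) (hst : ∀ e, s e < t e) (f : E → ℝ)
    (hf : ∀ e, 0 ≤ f e) (a : Fin n → ℝ)
    (hcons : ∀ i : Fin n,
      (∑ e ∈ Finset.univ.filter (fun e => t e = i.castSucc), f e) + a i =
        ∑ e ∈ Finset.univ.filter (fun e => s e = i.castSucc), f e)
    (m : ℕ) (hm : m < n) :
    ∑ i : Fin n, a i * pf s t hst f i m = outF s f ⟨m, by omega⟩ := by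
  induction m using Nat.strong_induction_on with
  | _ m ih =>
  have key : ∀ e ∈ (Finset.univ.filter (fun e : E => (t e : ℕ) = m)).attach,
      (∑ i : Fin n, a i * pf s t hst f i (s e.1 : ℕ)) * (f e.1 / outF s f (s e.1)) = f e.1 := by
    intro e _
    have h1 := (Finset.mem_filter.mp e.2).2
    have h2 := hst e.1
    rw [Fin.lt_def] at h2
    have hlt : (s e.1 : ℕ) < n := by omega
    have : (⟨(s e.1 : ℕ), by omega⟩ : Fin (n+1)) = s e.1 := Fin.eta _ _
    rw [ih _ (by omega) hlt]
    rw [this]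
    rcases eq_or_ne (outF s f (s e.1)) 0 with h0 | h0
    · rw [h0, outF_zero s f hf _ h0 e.1 rfl]
      simp
    · field_simp
  have unf : ∑ i : Fin n, a i * pf s t hst f i m =
      ∑ i : Fin n, (a i * (if m = (i : ℕ) then 1 else 0) +
        ∑ e ∈ (Finset.univ.filter (fun e : E => (t e : ℕ) = m)).attach,
          a i * (pf s t hst f i (s e.1 : ℕ) * (f e.1 / outF s f (s e.1)))) := by
    apply Finset.sum_congr rfl
    intro i _
    rw [pf, mul_add, Finset.mul_sum]
  rw [unf, Finset.sum_add_distrib]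
  have first : ∑ i : Fin n, a i * (if m = (i : ℕ) then 1 else 0) = a ⟨m, hm⟩ := by
    rw [Finset.sum_eq_single ⟨m, hm⟩]
    · simp
    · intro i _ hne
      have : m ≠ (i : ℕ) := fun h => hne (by ext; simp [h])
      simp [this]
    · simp
  have second : ∑ i : Fin n, ∑ e ∈ (Finset.univ.filter (fun e : E => (t e : ℕ) = m)).attach,
      a i * (pf s t hst f i (s e.1 : ℕ) * (f e.1 / outF s f (s e.1))) =
      ∑ e ∈ Finset.univ.filter (fun e : E => t e = Fin.castSucc ⟨m, hm⟩), f e := by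
    rw [Finset.sum_comm]
    have : ∀ e ∈ (Finset.univ.filter (fun e : E => (t e : ℕ) = m)).attach,
        ∑ i : Fin n, a i * (pf s t hst f i (s e.1 : ℕ) * (f e.1 / outF s f (s e.1))) = f e.1 := by
      intro e he
      have h3 : ∑ i : Fin n, a i * (pf s t hst f i (s e.1 : ℕ) * (f e.1 / outF s f (s e.1))) =
          (∑ i : Fin n, a i * pf s t hst f i (s e.1 : ℕ)) * (f e.1 / outF s f (s e.1)) := by
        rw [Finset.sum_mul]
        exact Finset.sum_congr rfl fun i _ => (mul_assoc _ _ _).symm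
      rw [h3, key e he]
    rw [Finset.sum_congr rfl this, Finset.sum_attach]
    apply Finset.sum_congr _ (fun _ _ => rfl)
    congr 1
    ext e
    constructor
    · intro h; exact Fin.ext h
    · intro h; exact congrArg Fin.val h
  rw [first, second, add_comm, hcons ⟨m, hm⟩]
  rfl

noncomputable def grec (s t : E → Fin (n+1)) (hst : ∀ e, s e < t e) (f : E → ℝ)
    (i : Fin n) : E → ℝ :=
  fun e => pf s t hst f i (s e : ℕ) * (f e / outF s f (s e))

lemma grec_mem (s t : E → Fin (n+1)) (hst : ∀ e, s e < t e) (f : E → ℝ)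
    (hf : ∀ e, 0 ≤ f e) (a : Fin n → ℝ) (ha : ∀ i, 0 ≤ a i)
    (hcons : ∀ i : Fin n,
      (∑ e ∈ Finset.univ.filter (fun e => t e = i.castSucc), f e) + a i =
        ∑ e ∈ Finset.univ.filter (fun e => s e = i.castSucc), f e)
    (i : Fin n) (hFi : outF s f i.castSucc ≠ 0) :
    grec s t hst f i ∈ flowPolytope n E s t (Pi.single i 1) := by
  constructor
  · intro e
    exact mul_nonneg (pf_nonneg s t hst f hf i _) (div_nonneg (hf e) (outF_nonneg s f hf _))
  intro j
  -- inflow of grec at j equals the attach-sum in the definition of pf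
  have hin : ∑ e ∈ Finset.univ.filter (fun e => t e = j.castSucc), grec s t hst f i e =
      ∑ e ∈ (Finset.univ.filter (fun e : E => (t e : ℕ) = (j : ℕ))).attach,
        pf s t hst f i (s e.1 : ℕ) * (f e.1 / outF s f (s e.1)) := by
    rw [Finset.sum_attach (Finset.univ.filter (fun e : E => (t e : ℕ) = (j : ℕ)))
      (fun e => pf s t hst f i (s e : ℕ) * (f e / outF s f (s e)))]
    apply Finset.sum_congr _ (fun _ _ => rfl)
    congr 1
    ext e
    exact ⟨fun h => congrArg Fin.val h, fun h => Fin.ext h⟩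
  have hsingle : (Pi.single i 1 : Fin n → ℝ) j = if (j : ℕ) = (i : ℕ) then 1 else 0 := by
    rw [Pi.single_apply]
    congr 1
    simp [Fin.ext_iff, eq_comm]
  have hpf : pf s t hst f i (j : ℕ) =
      (∑ e ∈ Finset.univ.filter (fun e => t e = j.castSucc), grec s t hst f i e) +
        (Pi.single i 1 : Fin n → ℝ) j := by
    rw [hin, hsingle, pf, add_comm]
  -- outflow computation
  have hout : ∑ e ∈ Finset.univ.filter (fun e => s e = j.castSucc), grec s t hst f i e =
      pf s t hst f i (j : ℕ) * (outF s f j.castSucc / outF s f j.castSucc) := by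
    rw [outF, Finset.sum_div, Finset.mul_sum]
    apply Finset.sum_congr rfl
    intro e he
    have hse : s e = j.castSucc := (Finset.mem_filter.mp he).2
    unfold grec
    rw [hse]
    rfl
  rw [← hpf, hout]
  rcases eq_or_ne (outF s f j.castSucc) 0 with h0 | h0
  · -- then j ≠ i, all inflow edges have f = 0, pf i j = 0
    have hji : (j : ℕ) ≠ (i : ℕ) := by
      intro h
      exact hFi (by rwa [show i.castSucc = j.castSucc from Fin.ext h.symm])
    have hinzero : ∀ e ∈ (Finset.univ.filter (fun e : E => (t e : ℕ) = (j : ℕ))).attach,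
        pf s t hst f i (s e.1 : ℕ) * (f e.1 / outF s f (s e.1)) = 0 := by
      intro e _
      have h1 := (Finset.mem_filter.mp e.2).2
      -- f e.1 = 0 : it is an inflow edge of j, whose total outflow is 0
      have hte : t e.1 = j.castSucc := Fin.ext h1
      have hinf : ∑ e' ∈ Finset.univ.filter (fun e' => t e' = j.castSucc), f e' = 0 := by
        have := hcons j
        rw [show (∑ e' ∈ Finset.univ.filter (fun e' => s e' = j.castSucc), f e') =
            outF s f j.castSucc from rfl, h0] at this
        have h4 : 0 ≤ ∑ e' ∈ Finset.univ.filter (fun e' => t e' = j.castSucc), f e' :=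
          Finset.sum_nonneg fun e' _ => hf e'
        have := ha j
        linarith
      have hfe : f e.1 = 0 := by
        have h5 : e.1 ∈ Finset.univ.filter (fun e' => t e' = j.castSucc) := by
          simp [hte]
        have := Finset.sum_eq_zero_iff_of_nonneg (fun e' _ => hf e') |>.mp hinf e.1 h5
        exact this
      rw [hfe]
      simp
    have hpfj : pf s t hst f i (j : ℕ) = 0 := by
      rw [pf, if_neg hji, Finset.sum_eq_zero hinzero]
      simp
    rw [hpfj, h0]
    simp
  · rw [div_self h0, mul_one]

noncomputable def uflow [DecidableEq E] (s t : E → Fin (n+1)) (hst : ∀ e, s e < t e) (ε : Fin n → E)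
    (hε : ∀ i, s (ε i) = i.castSucc) (v : Fin (n+1)) : E → ℝ :=
  if h : (v : ℕ) < n then
    (fun e => (if e = ε ⟨v, h⟩ then 1 else 0) +
      uflow s t hst ε hε (t (ε ⟨v, h⟩)) e)
  else 0
termination_by n + 1 - (v : ℕ)
decreasing_by
  have h1 := hst (ε ⟨v, h⟩)
  have h2 := hε ⟨v, h⟩
  rw [h2, Fin.lt_def] at h1
  simp only [Fin.coe_castSucc] at h1
  have := (t (ε ⟨v, h⟩)).isLt
  omega

theorem uflow_conv [DecidableEq E] (s t : E → Fin (n+1)) (hst : ∀ e, s e < t e) (ε : Fin n → E)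
    (hε : ∀ i, s (ε i) = i.castSucc) (v : Fin (n+1)) :
    (∀ e, 0 ≤ uflow s t hst ε hε v e) ∧ ∀ j : Fin n,
      (∑ e ∈ Finset.univ.filter (fun e => t e = j.castSucc), uflow s t hst ε hε v e) +
        (if v = j.castSucc then 1 else 0) =
        ∑ e ∈ Finset.univ.filter (fun e => s e = j.castSucc), uflow s t hst ε hε v e := by
  by_cases h : (v : ℕ) < n
  · have hw : n + 1 - (t (ε ⟨v, h⟩) : ℕ) < n + 1 - (v : ℕ) := by
      have h1 := hst (ε ⟨v, h⟩)
      have h2 := hε ⟨v, h⟩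
      rw [h2, Fin.lt_def] at h1
      simp only [Fin.coe_castSucc] at h1
      have := (t (ε ⟨v, h⟩)).isLt
      omega
    obtain ⟨ihnn, ihc⟩ := uflow_conv s t hst ε hε (t (ε ⟨v, h⟩))
    constructor
    · intro e
      rw [uflow, dif_pos h]
      have h1 := ihnn e
      have h2 : (0:ℝ) ≤ if e = ε ⟨v, h⟩ then 1 else 0 := by positivity
      show (0:ℝ) ≤ (if e = ε ⟨v, h⟩ then 1 else 0) + uflow s t hst ε hε (t (ε ⟨v, h⟩)) e
      linarith
    · intro j
      have hunf : ∀ e, uflow s t hst ε hε v e =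
          (if e = ε ⟨v, h⟩ then 1 else 0) + uflow s t hst ε hε (t (ε ⟨v, h⟩)) e := by
        intro e
        rw [uflow, dif_pos h]
      have hsum : ∀ (P : E → Prop) [DecidablePred P],
          ∑ e ∈ Finset.univ.filter (fun e => P e), uflow s t hst ε hε v e =
          (if P (ε ⟨v, h⟩) then 1 else 0) +
            ∑ e ∈ Finset.univ.filter (fun e => P e), uflow s t hst ε hε (t (ε ⟨v, h⟩)) e := by
        intro P _
        rw [Finset.sum_congr rfl (fun e _ => hunf e), Finset.sum_add_distrib,
          Finset.sum_ite_eq' (Finset.univ.filter (fun e => P e)) (ε ⟨v, h⟩) (fun _ => 1)]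
        simp
      rw [hsum (fun e => t e = j.castSucc), hsum (fun e => s e = j.castSucc)]
      have hveq : (if v = j.castSucc then (1:ℝ) else 0) =
          (if s (ε ⟨v, h⟩) = j.castSucc then 1 else 0) := by
        rw [hε ⟨v, h⟩]
        have hc : (Fin.castSucc ⟨(v : ℕ), h⟩ : Fin (n+1)) = v := Fin.ext rfl
        rw [hc]
      rw [hveq]
      have := ihc j
      linarith
  · constructor
    · intro e
      rw [uflow, dif_neg h]
      exact le_refl 0
    · intro j
      have hz : ∀ e, uflow s t hst ε hε v e = 0 := by
        intro e; rw [uflow, dif_neg h]; rfl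
      have hvj : v ≠ j.castSucc := by
        intro hv
        rw [hv] at h
        exact h (by simp [j.isLt])
      rw [Finset.sum_congr rfl (fun e _ => hz e), Finset.sum_congr rfl (fun e _ => hz e)]
      simp [hvj]
termination_by n + 1 - (v : ℕ)

lemma uflow_mem [DecidableEq E] (s t : E → Fin (n+1)) (hst : ∀ e, s e < t e) (ε : Fin n → E)
    (hε : ∀ i, s (ε i) = i.castSucc) (i : Fin n) :
    uflow s t hst ε hε i.castSucc ∈ flowPolytope n E s t (Pi.single i 1) := by
  obtain ⟨h1, h2⟩ := uflow_conv s t hst ε hε i.castSucc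
  refine ⟨h1, fun j => ?_⟩
  have := h2 j
  have hs : (if i.castSucc = j.castSucc then (1:ℝ) else 0) = (Pi.single i 1 : Fin n → ℝ) j := by
    rw [Pi.single_apply]
    congr 1
    simp [Fin.castSucc_inj, eq_comm]
  rwa [hs] at this

/-- The flow polytope decomposes as a weighted Minkowski sum:
`F_G(a) = a_1·F_G(e_1) + ⋯ + a_n·F_G(e_n)`. -/
theorem flowPolytope_minkowski_decomposition (n : ℕ) (hn : 1 ≤ n)
    (E : Type) [Fintype E] (s t : E → Fin (n + 1)) (hst : ∀ e, s e < t e)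
    (hout : ∀ i : Fin n, ∃ e, s e = i.castSucc)
    (a : Fin n → ℝ) (ha : ∀ i, 0 ≤ a i) :
    flowPolytope n E s t a =
      ∑ i : Fin n, a i • flowPolytope n E s t (Pi.single i 1) := by
  classical
  ext f
  rw [Set.mem_fintype_sum]
  constructor
  · rintro ⟨hf, hcons⟩
    choose ε hε using hout
    set g : Fin n → (E → ℝ) := fun i =>
      if outF s f i.castSucc = 0 then uflow s t hst ε hε i.castSucc
      else grec s t hst f i with hgdef
    have hg : ∀ i, g i ∈ flowPolytope n E s t (Pi.single i 1) := by
      intro i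
      by_cases h0 : outF s f i.castSucc = 0
      · simp only [hgdef, if_pos h0]
        exact uflow_mem s t hst ε hε i
      · simp only [hgdef, if_neg h0]
        exact grec_mem s t hst f hf a ha hcons i h0
    refine ⟨fun i => a i • g i, fun i => Set.smul_mem_smul_set (hg i), ?_⟩
    funext e
    have h1 : (∑ i : Fin n, a i • g i) e = ∑ i : Fin n, a i * g i e := by
      rw [Finset.sum_apply]
      exact Finset.sum_congr rfl fun i _ => rfl
    rw [h1]
    have hag : ∀ i, a i * g i e = a i * grec s t hst f i e := by
      intro i
      by_cases h0 : outF s f i.castSucc = 0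
      · have ha0 : a i = 0 := by
          have hc := hcons i
          have h5 : (∑ e' ∈ Finset.univ.filter (fun e' => s e' = i.castSucc), f e') =
              outF s f i.castSucc := rfl
          have h6 : 0 ≤ ∑ e' ∈ Finset.univ.filter (fun e' => t e' = i.castSucc), f e' :=
            Finset.sum_nonneg fun e' _ => hf e'
          rw [h5, h0] at hc
          linarith [ha i]
        simp [ha0]
      · simp only [hgdef, if_neg h0]
    rw [Finset.sum_congr rfl (fun i _ => hag i)]
    have hlt : ((s e : Fin (n+1)) : ℕ) < n := by
      have h2 := hst e
      rw [Fin.lt_def] at h2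
      have := (t e).isLt
      omega
    have hkey := pf_sum s t hst f hf a hcons ((s e : Fin (n+1)) : ℕ) hlt
    simp only [Fin.eta] at hkey
    have h3 : ∑ i : Fin n, a i * grec s t hst f i e =
        (∑ i : Fin n, a i * pf s t hst f i ((s e : Fin (n+1)) : ℕ)) *
          (f e / outF s f (s e)) := by
      rw [Finset.sum_mul]
      exact Finset.sum_congr rfl fun i _ => (mul_assoc _ _ _).symm
    rw [h3, hkey]
    rcases eq_or_ne (outF s f (s e)) 0 with h0 | h0
    · rw [h0, outF_zero s f hf _ h0 e rfl]
      simp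
    · field_simp
  · rintro ⟨g, hg, hsum⟩
    have hrep : ∀ i, ∃ y ∈ flowPolytope n E s t (Pi.single i 1), a i • y = g i :=
      fun i => Set.mem_smul_set.mp (hg i)
    choose y hy hgy using hrep
    have hf_eq : ∀ e, f e = ∑ i : Fin n, a i * y i e := by
      intro e
      rw [← hsum, Finset.sum_apply]
      exact Finset.sum_congr rfl fun i _ => by rw [← hgy i]; rfl
    constructor
    · intro e
      rw [hf_eq e]
      exact Finset.sum_nonneg fun i _ => mul_nonneg (ha i) ((hy i).1 e)
    · intro j
      have expand : ∑ i : Fin n, a i *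
          ((∑ e ∈ Finset.univ.filter (fun e => t e = j.castSucc), y i e) +
            (Pi.single i 1 : Fin n → ℝ) j) =
          (∑ e ∈ Finset.univ.filter (fun e => t e = j.castSucc), f e) + a j := by
        rw [Finset.sum_congr rfl (fun i _ => mul_add (a i) _ _), Finset.sum_add_distrib]
        congr 1
        · rw [Finset.sum_congr rfl
            (fun (i : Fin n) (_ : i ∈ Finset.univ) => Finset.mul_sum
              (Finset.univ.filter (fun e => t e = j.castSucc)) (fun e => y i e) (a i)),
            Finset.sum_comm]
          exact Finset.sum_congr rfl fun e _ => (hf_eq e).symm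
        · simp [Pi.single_apply, mul_ite]
      have expand' : ∑ i : Fin n, a i *
          (∑ e ∈ Finset.univ.filter (fun e => s e = j.castSucc), y i e) =
          ∑ e ∈ Finset.univ.filter (fun e => s e = j.castSucc), f e := by
        rw [Finset.sum_congr rfl
          (fun (i : Fin n) (_ : i ∈ Finset.univ) => Finset.mul_sum
            (Finset.univ.filter (fun e => s e = j.castSucc)) (fun e => y i e) (a i)),
          Finset.sum_comm]
        exact Finset.sum_congr rfl fun e _ => (hf_eq e).symm
      rw [← expand, ← expand']
      exact Finset.sum_congr rfl fun i _ => by rw [(hy i).2 j]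
end
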